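/- arXiv:1901.05028 — 6 statements merged into one kernel-verified Lean document; each statement's English description precedes it below -/
import Mathlib

section
/- Compensated coupling (sample-path identity): For every arrival sequence ω ∈ Θ^T, every initial state S^T, and every online policy with resulting trajectory (S^t) and actions (A^t), the regret satisfies Reg[ω] = Σ_{t=1}^{T} R_l(t, A^t, S^t)[ω] · 1{ω ∈ Q(t, A^t, S^t)}. -/
/-!
Along the online trajectory `S^{t-1} = Tr(A^t, S^t, θ^t)`, the compensation of the chosen action
is `R_l(t, A^t, S^t) = v_off(t, S^t) - v_off(t-1, S^{t-1}) - Re(A^t, S^t, θ^t)`, so the sum of the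
compensations telescopes to `v_off(T, S^T) - v_on`. The indicator of the disagreement event only
removes zero terms, because Bellman optimality makes every compensation nonnegative.
-/

open Finset

/-- Offline (prophet) value function: `voff Tr Re ω t s` is the optimal value with `t` periods
to go, in state `s`, on the arrival sample path `ω` (where `ω t` is the arrival with
time-to-go `t`), defined by the deterministic Bellman recursion. -/
noncomputable def voff {S A Θ : Type*} [Fintype A] [Nonempty A]
    (Tr : A → S → Θ → S) (Re : A → S → Θ → ℝ) (ω : ℕ → Θ) : ℕ → S → ℝ
  | 0, _ => 0
  | (t + 1), s => ⨆ a : A, (Re a s (ω (t + 1)) + voff Tr Re ω t (Tr a s (ω (t + 1))))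

/-- Marginal compensation of action `a` at time-to-go `t` in state `s` on sample path `ω`. -/
noncomputable def Rl {S A Θ : Type*} [Fintype A] [Nonempty A]
    (Tr : A → S → Θ → S) (Re : A → S → Θ → ℝ) (ω : ℕ → Θ) (t : ℕ) (a : A) (s : S) : ℝ :=
  voff Tr Re ω t s - (Re a s (ω t) + voff Tr Re ω (t - 1) (Tr a s (ω t)))

theorem Finset.sum_Icc_one_sub_pred {M : Type*} [AddCommGroup M] (f : ℕ → M) (T : ℕ) :
    ∑ t ∈ Icc 1 T, (f t - f (t - 1)) = f T - f 0 := by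
  induction T with
  | zero => simp
  | succ n ih =>
    rw [sum_Icc_succ_top (Nat.le_add_left 1 n), ih, Nat.add_sub_cancel]
    abel

theorem mul_ite_pos_of_nonneg {α : Type*} [MulZeroOneClass α] [PartialOrder α] {r : α}
    [Decidable (0 < r)] (hr : 0 ≤ r) : r * (if 0 < r then 1 else 0) = r := by
  rcases hr.lt_or_eq with hpos | rfl
  · simp [hpos]
  · simp

section Compensation

variable {S A Θ : Type*} [Fintype A] [Nonempty A]
  (Tr : A → S → Θ → S) (Re : A → S → Θ → ℝ) (ω : ℕ → Θ)

@[simp]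
theorem voff_zero (s : S) : voff Tr Re ω 0 s = 0 := by
  simp [voff]

theorem Rl_nonneg {t : ℕ} (ht : 1 ≤ t) (a : A) (s : S) : 0 ≤ Rl Tr Re ω t a s := by
  obtain ⟨n, rfl⟩ := Nat.exists_eq_add_of_le' ht
  rw [Rl, voff, Nat.add_sub_cancel, sub_nonneg]
  exact le_ciSup (f := fun b => Re b s (ω (n + 1)) + voff Tr Re ω n (Tr b s (ω (n + 1))))
    (Set.finite_range _).bddAbove a

theorem Rl_eq_sub_of_step {t : ℕ} {a : A} {s s' : S} (hs' : s' = Tr a s (ω t)) :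
    Rl Tr Re ω t a s = voff Tr Re ω t s - voff Tr Re ω (t - 1) s' - Re a s (ω t) := by
  rw [Rl, hs']
  ring

end Compensation

open scoped Classical in
/-- **Compensated coupling (sample-path identity)**: for every arrival sequence `ω`, every
online trajectory `St` with actions `Act` (satisfying the state recursion
`S^{t-1} = Tr(A^t, S^t, θ^t)`), the regret
`v_off(T, S^T)[ω] − Σ_{t=1}^T Re(A^t, S^t, θ^t)` equals
`Σ_{t=1}^T R_l(t, A^t, S^t)[ω] · 1{ω ∈ Q(t, A^t, S^t)}`, where
`Q(t,a,s) = {ω : R_l(t,a,s)[ω] > 0}` is the disagreement event. -/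
theorem compensated_coupling_sample_path
    {S A Θ : Type*} [Fintype A] [Nonempty A]
    (T : ℕ) (Tr : A → S → Θ → S) (Re : A → S → Θ → ℝ)
    (ω : ℕ → Θ) (Act : ℕ → A) (St : ℕ → S)
    (hSt : ∀ t, 1 ≤ t → t ≤ T → St (t - 1) = Tr (Act t) (St t) (ω t)) :
    voff Tr Re ω T (St T) - ∑ t ∈ Finset.Icc 1 T, Re (Act t) (St t) (ω t)
      = ∑ t ∈ Finset.Icc 1 T,
          Rl Tr Re ω t (Act t) (St t) *
            (if 0 < Rl Tr Re ω t (Act t) (St t) then 1 else 0) := by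
  have hsummand : ∀ t ∈ Icc 1 T,
      Rl Tr Re ω t (Act t) (St t) * (if 0 < Rl Tr Re ω t (Act t) (St t) then 1 else 0)
        = (voff Tr Re ω t (St t) - voff Tr Re ω (t - 1) (St (t - 1)))
          - Re (Act t) (St t) (ω t) := by
    intro t ht
    obtain ⟨h1, hT⟩ := mem_Icc.mp ht
    rw [mul_ite_pos_of_nonneg (Rl_nonneg Tr Re ω h1 _ _),
      Rl_eq_sub_of_step Tr Re ω (hSt t h1 hT)]
  rw [sum_congr rfl hsummand, sum_sub_distrib,
    sum_Icc_one_sub_pred (fun t => voff Tr Re ω t (St t)), voff_zero, sub_zero]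
end

section
/- Fluid Bayes Selector for the multi-secretary problem: Consider the policy that maintains a remaining budget B^t (with B^T = B) and, upon an arrival of type j at time t, rejects if B^t = 0; accepts if j = 1 (and B^t ≥ 1); and for j > 1 accepts if and only if B^t/t ≥ p̄_j − p_j/2 (and B^t ≥ 1), where acceptance collects r_j and sets B^{t−1} = B^t − 1 while rejection sets B^{t−1} = B^t. Then the expected regret of this policy satisfies E[v_off(T, B) − v_on] ≤ rmax · Σ_{j=2}^{n} 2/p_j ≤ 2(n−1) rmax / min_j p_j. -/
open Finset MeasureTheory ProbabilityTheory

/-- Offline value for the multi-secretary problem: `msVoff r ω t b` is the maximum total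
reward obtainable by accepting at most `b` of the arrivals `ω t, …, ω 1` (the sum of the
`min(b,t)` largest rewards among them), via the Bellman recursion. -/
noncomputable def msVoff {n : ℕ} (r : Fin n → ℝ) (ω : ℕ → Fin n) : ℕ → ℕ → ℝ
  | 0, _ => 0
  | _ + 1, 0 => 0
  | t + 1, b + 1 => max (r (ω (t + 1)) + msVoff r ω t b) (msVoff r ω t (b + 1))

/-- The acceptance rule of the Fluid Bayes Selector for multi-secretary: upon an arrival of
type `j` at time-to-go `t` with remaining budget `b`, accept iff `b ≥ 1` and either `j = 1`
(the top type, index `0`) or `b/t ≥ p̄_j − p_j/2`, where `p̄_j = Σ_{i ≤ j} p_i`. -/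
def fluidAccept {n : ℕ} (p : Fin n → ℝ) (t : ℕ) (j : Fin n) (b : ℕ) : Prop :=
  1 ≤ b ∧ ((j : ℕ) = 0 ∨
    (∑ i ∈ Finset.univ.filter (fun i => i ≤ j), p i) - p j / 2 ≤ (b : ℝ) / t)


section msAuxAll
open Real

lemma msAux_bernoulli_mgf (q : ℝ) (h0 : 0 ≤ q) (h1 : q ≤ 1) (l : ℝ) :
    1 + q * (Real.exp l - 1) ≤ Real.exp (q * l + l ^ 2 / 8) := by
  set D : ℝ → ℝ := fun l => 1 + q * (Real.exp l - 1) with hD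
  have hDpos : ∀ l, 0 < D l := by
    intro l
    have : min 1 (Real.exp l) ≤ D l := by
      have h1' : min 1 (Real.exp l) ≤ 1 := min_le_left _ _
      have h2' : min 1 (Real.exp l) ≤ Real.exp l := min_le_right _ _
      have : D l = (1 - q) * 1 + q * Real.exp l := by simp [hD]; ring
      rw [this]
      nlinarith [h1', h2']
    exact lt_of_lt_of_le (lt_min one_pos (exp_pos l)) this
  set h : ℝ → ℝ := fun l => q * l + l ^ 2 / 8 - Real.log (D l) with hh
  set h₁ : ℝ → ℝ := fun l => q + l / 4 - q * Real.exp l / D l with hh₁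
  have hd : ∀ l, HasDerivAt h (h₁ l) l := by
    intro l
    have hd1 : HasDerivAt D (q * Real.exp l) l := by
      exact (((Real.hasDerivAt_exp l).sub_const 1).const_mul q).const_add 1
    have hd2 : HasDerivAt (fun l => Real.log (D l)) (q * Real.exp l / D l) l :=
      hd1.log (hDpos l).ne'
    have hd3 : HasDerivAt (fun l => q * l + l ^ 2 / 8) (q + 2 * l ^ 1 / 8) l := by
      exact ((hasDerivAt_id l).const_mul q).add ((hasDerivAt_pow 2 l).div_const 8) |>.congr_deriv
        (by ring)
    have := hd3.sub hd2
    refine this.congr_deriv ?_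
    simp [hh₁]; ring
  have hd1' : ∀ l, HasDerivAt h₁ (1 / 4 - (q * Real.exp l * D l - q * Real.exp l * (q * Real.exp l)) / (D l) ^ 2) l := by
    intro l
    have hD' : HasDerivAt D (q * Real.exp l) l := by
      exact (((Real.hasDerivAt_exp l).sub_const 1).const_mul q).const_add 1
    have hnum : HasDerivAt (fun l => q * Real.exp l) (q * Real.exp l) l :=
      (Real.hasDerivAt_exp l).const_mul q
    have hdiv := hnum.div hD' (hDpos l).ne'
    have hlin : HasDerivAt (fun l => q + l / 4) (1 / 4) l := by
      simpa using ((hasDerivAt_id l).div_const 4).const_add q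
    exact hlin.sub hdiv
  have hderiv2_nonneg : ∀ l, 0 ≤ 1 / 4 - (q * Real.exp l * D l - q * Real.exp l * (q * Real.exp l)) / (D l) ^ 2 := by
    intro l
    have hA : 0 ≤ q * Real.exp l := mul_nonneg h0 (exp_pos l).le
    have hDl := hDpos l
    have hid : D l = q * Real.exp l + (1 - q) := by simp [hD]; ring
    rw [sub_nonneg, div_le_iff₀ (by positivity)]
    nlinarith [sq_nonneg (q * Real.exp l - (1 - q))]
  have hmono₁ : Monotone h₁ := by
    refine monotone_of_deriv_nonneg (fun l => (hd1' l).differentiableAt) ?_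
    intro l
    rw [(hd1' l).deriv]
    exact hderiv2_nonneg l
  have h₁zero : h₁ 0 = 0 := by simp [hh₁, hD]
  have hdiff : Differentiable ℝ h := fun x => (hd x).differentiableAt
  have hnonneg : ∀ l, 0 ≤ h l := by
    intro l
    have hzero : h 0 = 0 := by simp [hh, hD]
    rcases le_total 0 l with hl | hl
    · have hm : MonotoneOn h (Set.Ici 0) := by
        refine monotoneOn_of_deriv_nonneg (convex_Ici 0) hdiff.continuous.continuousOn
          (fun x _ => hdiff.differentiableAt.differentiableWithinAt) ?_
        intro x hx
        rw [interior_Ici] at hx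
        rw [(hd x).deriv]
        have := hmono₁ (le_of_lt hx)
        rw [h₁zero] at this
        exact this
      have := hm (Set.self_mem_Ici) (Set.mem_Ici.2 hl) hl
      linarith [hzero ▸ this]
    · have hm : AntitoneOn h (Set.Iic 0) := by
        refine antitoneOn_of_deriv_nonpos (convex_Iic 0) hdiff.continuous.continuousOn
          (fun x _ => hdiff.differentiableAt.differentiableWithinAt) ?_
        intro x hx
        rw [interior_Iic] at hx
        rw [(hd x).deriv]
        have := hmono₁ (le_of_lt hx)
        rw [h₁zero] at this
        exact this
      have := hm (Set.mem_Iic.2 hl) (Set.self_mem_Iic) hl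
      linarith [hzero ▸ this]
  have := hnonneg l
  have hlog : Real.log (D l) ≤ q * l + l ^ 2 / 8 := by
    simp only [hh] at this; linarith
  calc D l = Real.exp (Real.log (D l)) := (Real.exp_log (hDpos l)).symm
  _ ≤ Real.exp (q * l + l ^ 2 / 8) := exp_le_exp.2 hlog



namespace msAux
open scoped Classical
variable {n : ℕ} (r : Fin n → ℝ) (ω : ℕ → Fin n)

lemma voff_zero_b (t : ℕ) : msVoff r ω t 0 = 0 := by
  cases t <;> simp [msVoff]

lemma voff_succ (t b : ℕ) :
    msVoff r ω (t + 1) (b + 1)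
      = max (r (ω (t + 1)) + msVoff r ω t b) (msVoff r ω t (b + 1)) := rfl

lemma voff_nonneg (hr : ∀ j, 0 ≤ r j) : ∀ t b, 0 ≤ msVoff r ω t b := by
  intro t
  induction t with
  | zero => intro b; simp [msVoff]
  | succ t ih =>
    intro b
    cases b with
    | zero => simp [msVoff]
    | succ b => exact le_trans (ih (b + 1)) (le_max_right _ _)

lemma voff_mono_t (hr : ∀ j, 0 ≤ r j) : ∀ t b, msVoff r ω t b ≤ msVoff r ω (t + 1) b := by
  intro t b
  cases b with
  | zero => simp [voff_zero_b]
  | succ b => exact le_max_right _ _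

lemma voff_mono_b (hr : ∀ j, 0 ≤ r j) : ∀ t b, msVoff r ω t b ≤ msVoff r ω t (b + 1) := by
  intro t
  induction t with
  | zero => intro b; simp [msVoff]
  | succ t ih =>
    intro b
    cases b with
    | zero =>
      rw [voff_zero_b]
      exact voff_nonneg r ω hr _ _
    | succ b =>
      rw [voff_succ, voff_succ]
      exact max_le_max (by simpa using ih b) (ih (b + 1))

lemma voff_marginal (rmax : ℝ) (hr : ∀ j, r j ≤ rmax) (hrm : 0 ≤ rmax) :
    ∀ t b, msVoff r ω t (b + 1) ≤ msVoff r ω t b + rmax := by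
  intro t
  induction t with
  | zero => intro b; simp [msVoff]; exact hrm
  | succ t ih =>
    intro b
    cases b with
    | zero =>
      have e1 : msVoff r ω (t + 1) 0 = 0 := voff_zero_b r ω (t + 1)
      have e2 : msVoff r ω t 0 = 0 := voff_zero_b r ω t
      rw [voff_succ, e1]
      have h2 := ih 0
      rw [e2] at h2
      refine max_le ?_ ?_
      · rw [e2]; linarith [hr (ω (t + 1))]
      · linarith
    | succ b =>
      rw [voff_succ, voff_succ]
      refine max_le ?_ ?_
      · exact le_trans (by linarith [ih b]) (le_trans (add_le_add_left (le_max_left _ _) rmax) le_rfl)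
      · exact le_trans (ih (b + 1)) (add_le_add_left (le_max_right _ _) rmax)

lemma voff_le (rmax : ℝ) (hr : ∀ j, r j ≤ rmax) (hrm : 0 ≤ rmax) :
    ∀ t b, msVoff r ω t b ≤ b * rmax := by
  intro t
  induction t with
  | zero => intro b; simp [msVoff]; positivity
  | succ t ih =>
    intro b
    cases b with
    | zero => simp [msVoff]
    | succ b =>
      rw [voff_succ]
      refine max_le ?_ ?_
      · have := ih b
        push_cast
        nlinarith [hr (ω (t + 1))]
      · refine le_trans (ih (b + 1)) le_rfl

/-- number of arrivals among `ω 1, …, ω s` with reward strictly above `c` -/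
noncomputable def cntGT (c : ℝ) (s : ℕ) : ℕ := ((Finset.Icc 1 s).filter (fun u => c < r (ω u))).card

/-- number of arrivals among `ω 1, …, ω s` with reward at least `c` -/
noncomputable def cntGE (c : ℝ) (s : ℕ) : ℕ := ((Finset.Icc 1 s).filter (fun u => c ≤ r (ω u))).card

lemma cnt_succ_aux (P : ℕ → Prop) [DecidablePred P] (s : ℕ) :
    ((Finset.Icc 1 (s + 1)).filter P).card
      = ((Finset.Icc 1 s).filter P).card + (if P (s + 1) then 1 else 0) := by
  have h : Finset.Icc 1 (s + 1) = insert (s + 1) (Finset.Icc 1 s) := by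
    rw [Finset.insert_Icc_right_eq_Icc_add_one (by omega)]
  rw [h, Finset.filter_insert]
  split
  · rw [Finset.card_insert_of_notMem (by simp)]
  · simp

lemma cntGT_succ (c : ℝ) (s : ℕ) :
    cntGT r ω c (s + 1) = cntGT r ω c s + (if c < r (ω (s + 1)) then 1 else 0) := by
  classical
  exact cnt_succ_aux _ s

lemma cntGE_succ (c : ℝ) (s : ℕ) :
    cntGE r ω c (s + 1) = cntGE r ω c s + (if c ≤ r (ω (s + 1)) then 1 else 0) := by
  classical
  exact cnt_succ_aux _ s

lemma accept_disagree (hr : ∀ j, 0 ≤ r j) (c : ℝ) (hc : 0 ≤ c) :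
    ∀ s b, c + msVoff r ω s b < msVoff r ω s (b + 1) → b + 1 ≤ cntGT r ω c s := by
  intro s
  induction s with
  | zero =>
    intro b h
    simp [msVoff] at h
    linarith
  | succ s ih =>
    intro b h
    rw [voff_succ] at h
    rw [cntGT_succ]
    rcases lt_max_iff.1 h with h1 | h2
    · -- branch: x + V(s,b) > c + V(s+1,b)
      cases b with
      | zero =>
        have h0 : msVoff r ω s 0 = 0 := voff_zero_b r ω s
        have h0' : msVoff r ω (s + 1) 0 = 0 := voff_zero_b r ω (s + 1)
        rw [h0', h0] at h1
        have hx : c < r (ω (s + 1)) := by linarith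
        simp [hx]
      | succ b =>
        have hA : r (ω (s + 1)) + msVoff r ω s b ≤ msVoff r ω (s + 1) (b + 1) :=
          le_max_left _ _
        have hB : msVoff r ω s (b + 1) ≤ msVoff r ω (s + 1) (b + 1) :=
          voff_mono_t r ω hr s (b + 1)
        have key : c + msVoff r ω s b < msVoff r ω s (b + 1) := by linarith
        have hx : c < r (ω (s + 1)) := by linarith
        have := ih b key
        simp [hx]
        omega
    · -- branch: V(s,b+1) > c + V(s+1,b)
      have hB : msVoff r ω s b ≤ msVoff r ω (s + 1) b := voff_mono_t r ω hr s b
      have := ih b (by linarith)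
      split <;> omega

lemma reject_disagree (hr : ∀ j, 0 ≤ r j) (c : ℝ) :
    ∀ s b, msVoff r ω s (b + 1) < c + msVoff r ω s b → cntGE r ω c s ≤ b := by
  intro s
  induction s with
  | zero =>
    intro b h
    simp [cntGE]
  | succ s ih =>
    intro b h
    rw [voff_succ] at h
    have h1 : r (ω (s + 1)) + msVoff r ω s b < c + msVoff r ω (s + 1) b :=
      lt_of_le_of_lt (le_max_left _ _) h
    have h2 : msVoff r ω s (b + 1) < c + msVoff r ω (s + 1) b :=
      lt_of_le_of_lt (le_max_right _ _) h
    rw [cntGE_succ]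
    cases b with
    | zero =>
      have h0 : msVoff r ω (s + 1) 0 = 0 := voff_zero_b r ω (s + 1)
      have h0' : msVoff r ω s 0 = 0 := voff_zero_b r ω s
      rw [h0] at h1 h2
      rw [h0'] at h1
      have hx : ¬ (c ≤ r (ω (s + 1))) := by
        push_neg
        nlinarith [voff_nonneg r ω hr s 0, h1]
      have := ih 0 (by rw [h0']; linarith)
      simp [hx]
      omega
    | succ b =>
      rcases max_cases (r (ω (s + 1)) + msVoff r ω s b) (msVoff r ω s (b + 1)) with
        ⟨hm, hge⟩ | ⟨hm, hlt⟩
      · -- V(s+1,b+1) = x + V(s,b)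
        rw [voff_succ, hm] at h1 h2
        have key : msVoff r ω s (b + 1) < c + msVoff r ω s b := by linarith
        have := ih b key
        split <;> omega
      · -- V(s+1,b+1) = V(s,b+1)
        rw [voff_succ, hm] at h1 h2
        have hx : ¬ (c ≤ r (ω (s + 1))) := by
          push_neg; linarith
        have := ih (b + 1) (by linarith)
        simp [hx]
        omega

end msAux


namespace msAux
variable {n : ℕ} (r : Fin n → ℝ) (ω : ℕ → Fin n)
open scoped Classical

/-- the "disagreement" deviation condition -/
def devProp (p : Fin n → ℝ) (t : ℕ) (j : Fin n) (b : ℕ) : Prop :=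
  if fluidAccept p t j b then b ≤ cntGT r ω (r j) (t - 1)
  else cntGE r ω (r j) (t - 1) < b

lemma step_loss (p : Fin n → ℝ) (rmax : ℝ) (hr0 : ∀ j, 0 ≤ r j) (hrle : ∀ j, r j ≤ rmax)
    (hrm : 0 ≤ rmax) (hj0 : ∀ j : Fin n, (j : ℕ) = 0 → r j = rmax)
    (t b : ℕ) (ht : 1 ≤ t) :
    msVoff r ω t b - (if fluidAccept p t (ω t) b then r (ω t) else 0)
      - msVoff r ω (t - 1) (b - if fluidAccept p t (ω t) b then 1 else 0)
    ≤ if (1 ≤ ((ω t : Fin n) : ℕ) ∧ 1 ≤ b ∧ devProp r ω p t (ω t) b) then rmax else 0 := by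
  have hRHS : (0:ℝ) ≤ if (1 ≤ ((ω t : Fin n) : ℕ) ∧ 1 ≤ b ∧ devProp r ω p t (ω t) b)
      then rmax else 0 := by split <;> simp [hrm]
  obtain ⟨s, rfl⟩ : ∃ s, t = s + 1 := ⟨t - 1, by omega⟩
  have hs : s + 1 - 1 = s := rfl
  cases b with
  | zero =>
    have hacc : ¬ fluidAccept p (s + 1) (ω (s + 1)) 0 := fun h => by
      exact absurd h.1 (by omega)
    rw [if_neg hacc, if_neg hacc]
    simp [voff_zero_b, hRHS]
  | succ b₀ =>
    by_cases hacc : fluidAccept p (s + 1) (ω (s + 1)) (b₀ + 1)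
    · rw [if_pos hacc, if_pos hacc]
      have hb' : b₀ + 1 - 1 = b₀ := rfl
      rw [hs, hb']
      rw [voff_succ]
      rcases max_cases (r (ω (s + 1)) + msVoff r ω s b₀) (msVoff r ω s (b₀ + 1)) with
        ⟨hm, _⟩ | ⟨hm, hlt⟩
      · rw [hm]; linarith [hRHS]
      · rw [hm]
        by_cases hpos : msVoff r ω s (b₀ + 1) - r (ω (s + 1)) - msVoff r ω s b₀ ≤ 0
        · linarith
        · push_neg at hpos
          have hdis : b₀ + 1 ≤ cntGT r ω (r (ω (s + 1))) s :=
            accept_disagree r ω hr0 (r (ω (s + 1))) (hr0 _) s b₀ (by linarith)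
          have hj : 1 ≤ ((ω (s + 1) : Fin n) : ℕ) := by
            by_contra hj'
            have h0 : ((ω (s + 1) : Fin n) : ℕ) = 0 := by omega
            have := hj0 _ h0
            have hmarg := voff_marginal r ω rmax hrle hrm s b₀
            rw [this] at hpos
            linarith
          rw [if_pos ⟨hj, by omega, by rw [devProp, if_pos hacc]; exact hdis⟩]
          have hmarg := voff_marginal r ω rmax hrle hrm s b₀
          linarith [hr0 (ω (s + 1))]
    · rw [if_neg hacc, if_neg hacc]
      have hb' : b₀ + 1 - 0 = b₀ + 1 := rfl
      rw [hs, Nat.sub_zero]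
      rw [voff_succ]
      rcases max_cases (r (ω (s + 1)) + msVoff r ω s b₀) (msVoff r ω s (b₀ + 1)) with
        ⟨hm, hge⟩ | ⟨hm, _⟩
      · rw [hm]
        by_cases hpos : r (ω (s + 1)) + msVoff r ω s b₀ - 0 - msVoff r ω s (b₀ + 1) ≤ 0
        · linarith
        · push_neg at hpos
          have hdis : cntGE r ω (r (ω (s + 1))) s ≤ b₀ :=
            reject_disagree r ω hr0 (r (ω (s + 1))) s b₀ (by linarith)
          have hj : 1 ≤ ((ω (s + 1) : Fin n) : ℕ) := by
            by_contra hj'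
            have h0 : ((ω (s + 1) : Fin n) : ℕ) = 0 := by omega
            exact hacc ⟨by omega, Or.inl h0⟩
          rw [if_pos ⟨hj, by omega, by rw [devProp, if_neg hacc, Nat.add_sub_cancel]; omega⟩]
          have hmono := voff_mono_b r ω hr0 s b₀
          linarith [hrle (ω (s + 1))]
      · rw [hm]
        calc msVoff r ω s (b₀ + 1) - 0 - msVoff r ω s (b₀ + 1) = 0 := by ring
        _ ≤ _ := hRHS

lemma grid_bound (p : Fin n → ℝ) (rmax : ℝ) (hr0 : ∀ j, 0 ≤ r j) (hrle : ∀ j, r j ≤ rmax)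
    (hrm : 0 ≤ rmax) (hj0 : ∀ j : Fin n, (j : ℕ) = 0 → r j = rmax)
    (B t b : ℕ) (ht : 1 ≤ t) (hbB : b ≤ B) :
    msVoff r ω t b - (if fluidAccept p t (ω t) b then r (ω t) else 0)
      - msVoff r ω (t - 1) (b - if fluidAccept p t (ω t) b then 1 else 0)
    ≤ ∑ j' ∈ Finset.univ.filter (fun j' : Fin n => 1 ≤ (j' : ℕ)), ∑ b'' ∈ Finset.Icc 1 B,
        (if (ω t = j' ∧ b = b'' ∧ devProp r ω p t j' b'') then rmax else 0) := by
  refine le_trans (step_loss r ω p rmax hr0 hrle hrm hj0 t b ht) ?_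
  by_cases hC : 1 ≤ ((ω t : Fin n) : ℕ) ∧ 1 ≤ b ∧ devProp r ω p t (ω t) b
  · rw [if_pos hC]
    obtain ⟨hj, hb, hdev⟩ := hC
    calc rmax = ∑ b'' ∈ Finset.Icc 1 B,
          (if (ω t = ω t ∧ b = b'' ∧ devProp r ω p t (ω t) b'') then rmax else 0) := by
          rw [Finset.sum_eq_single b]
          · simp [hdev]
          · intro b'' _ hne
            rw [if_neg]
            rintro ⟨-, h, -⟩
            exact hne h.symm
          · intro hmem
            exact absurd (Finset.mem_Icc.2 ⟨hb, hbB⟩) hmem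
    _ ≤ _ := by
          refine Finset.single_le_sum (f := fun j' => ∑ b'' ∈ Finset.Icc 1 B,
            (if (ω t = j' ∧ b = b'' ∧ devProp r ω p t j' b'') then rmax else 0)) ?_ ?_
          · intro i _
            refine Finset.sum_nonneg fun b'' _ => ?_
            split <;> simp [hrm]
          · exact Finset.mem_filter.2 ⟨Finset.mem_univ _, hj⟩
  · rw [if_neg hC]
    refine Finset.sum_nonneg fun j' _ => Finset.sum_nonneg fun b'' _ => ?_
    split <;> simp [hrm]

end msAux


lemma msAux_pi_measurable {κ : Type*} [Finite κ] {n : ℕ}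
    (A : Set (κ → Fin n)) : MeasurableSet A := by
  have h1 : ∀ v : κ → Fin n, MeasurableSet {v} := by
    intro v
    rw [← Set.univ_pi_singleton v]
    exact MeasurableSet.univ_pi fun i => measurableSet_singleton _
  rw [← Set.biUnion_of_singleton A]
  exact MeasurableSet.biUnion A.to_countable (fun v _ => h1 v)

lemma msAux_block_indep {Ω : Type*} [MeasurableSpace Ω] (μ : Measure Ω)
    [IsProbabilityMeasure μ] {n T : ℕ} (hn : 0 < n)
    (W : Ω → ℕ → Fin n) (hWmeas : ∀ t, Measurable fun x => W x t)
    (hindep : iIndepFun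
      (fun (t : (Finset.Icc 1 T : Finset ℕ)) x => W x t) μ)
    (I J : Finset ℕ) (hI : I ⊆ Finset.Icc 1 T) (hJ : J ⊆ Finset.Icc 1 T)
    (hIJ : Disjoint I J)
    (P Q : (ℕ → Fin n) → Prop)
    (hP : ∀ ω ω', (∀ u ∈ I, ω u = ω' u) → P ω → P ω')
    (hQ : ∀ ω ω', (∀ u ∈ J, ω u = ω' u) → Q ω → Q ω') :
    μ ({x | P (W x)} ∩ {x | Q (W x)}) = μ {x | P (W x)} * μ {x | Q (W x)} := by
  classical
  set ι := { u : ℕ // u ∈ Finset.Icc 1 T } with hι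
  set S : Finset ι := I.subtype (· ∈ Finset.Icc 1 T) with hS
  set S' : Finset ι := J.subtype (· ∈ Finset.Icc 1 T) with hS'
  have hdisj : Disjoint S S' := by
    rw [Finset.disjoint_left]
    intro a ha ha'
    rw [hS, Finset.mem_subtype] at ha
    rw [hS', Finset.mem_subtype] at ha'
    exact (Finset.disjoint_left.1 hIJ) ha ha'
  have hindep2 := hindep.indepFun_finset S S' hdisj (fun i => hWmeas i)
  -- extension functions
  have hmemI : ∀ u ∈ I, u ∈ Finset.Icc 1 T := fun u hu => hI hu
  have hmemJ : ∀ u ∈ J, u ∈ Finset.Icc 1 T := fun u hu => hJ hu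
  set extI : ({ i : ι // i ∈ S } → Fin n) → (ℕ → Fin n) := fun v u =>
    if h : u ∈ I then v ⟨⟨u, hmemI u h⟩, by rw [hS, Finset.mem_subtype]; exact h⟩
    else ⟨0, hn⟩ with hextI
  set extJ : ({ i : ι // i ∈ S' } → Fin n) → (ℕ → Fin n) := fun v u =>
    if h : u ∈ J then v ⟨⟨u, hmemJ u h⟩, by rw [hS', Finset.mem_subtype]; exact h⟩
    else ⟨0, hn⟩ with hextJ
  set A : Set ({ i : ι // i ∈ S } → Fin n) := {v | P (extI v)} with hA
  set A' : Set ({ i : ι // i ∈ S' } → Fin n) := {v | Q (extJ v)} with hA'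
  have hpreI : {x | P (W x)} = (fun a (i : { i : ι // i ∈ S }) => W a i) ⁻¹' A := by
    ext x
    simp only [Set.mem_preimage, Set.mem_setOf_eq, hA]
    constructor
    · intro h
      refine hP (W x) _ ?_ h
      intro u hu
      rw [hextI]
      simp only [dif_pos hu]
    · intro h
      refine hP _ (W x) ?_ h
      intro u hu
      rw [hextI]
      simp only [dif_pos hu]
  have hpreJ : {x | Q (W x)} = (fun a (i : { i : ι // i ∈ S' }) => W a i) ⁻¹' A' := by
    ext x
    simp only [Set.mem_preimage, Set.mem_setOf_eq, hA']
    constructor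
    · intro h
      refine hQ (W x) _ ?_ h
      intro u hu
      rw [hextJ]
      simp only [dif_pos hu]
    · intro h
      refine hQ _ (W x) ?_ h
      intro u hu
      rw [hextJ]
      simp only [dif_pos hu]
  rw [hpreI, hpreJ]
  exact hindep2.measure_inter_preimage_eq_mul A A'
    (msAux_pi_measurable A) (msAux_pi_measurable A')


variable {Ω : Type*} [MeasurableSpace Ω] {μ : Measure Ω} [IsProbabilityMeasure μ]
  {ι : Type*}

lemma msAux_integrable_exp_sum (X : ι → Ω → ℝ) (hmeas : ∀ i, Measurable (X i))
    (hbdd : ∀ i x, X i x ∈ Set.Icc (0:ℝ) 1) (F : Finset ι) (l : ℝ) :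
    Integrable (fun x => Real.exp (l * ∑ i ∈ F, X i x)) μ := by
  have hm : Measurable fun x => Real.exp (l * ∑ i ∈ F, X i x) := by
    exact ((Finset.measurable_sum F fun i _ => hmeas i).const_mul l).exp
  refine Integrable.mono' (integrable_const (Real.exp (|l| * F.card))) hm.aestronglyMeasurable
    (ae_of_all _ fun x => ?_)
  rw [Real.norm_eq_abs, abs_of_pos (exp_pos _), exp_le_exp]
  have h1 : ∑ i ∈ F, X i x ≤ F.card := by
    calc ∑ i ∈ F, X i x ≤ ∑ i ∈ F, 1 := Finset.sum_le_sum fun i _ => (hbdd i x).2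
    _ = F.card := by simp
  have h2 : (0:ℝ) ≤ ∑ i ∈ F, X i x := Finset.sum_nonneg fun i _ => (hbdd i x).1
  nlinarith [le_abs_self l, neg_abs_le l, abs_nonneg l]

lemma msAux_chernoff_up (X : ι → Ω → ℝ)
    (hind : iIndepFun X μ) (hmeas : ∀ i, Measurable (X i))
    (hbdd : ∀ i x, X i x ∈ Set.Icc (0:ℝ) 1) (F : Finset ι) (q m : ℝ)
    (hmgf : ∀ i ∈ F, ∀ l : ℝ, mgf (X i) μ l ≤ Real.exp (q * l + l ^ 2 / 8))
    (hF : 0 < F.card) (ha : 0 < m - F.card * q) :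
    (μ {x | m ≤ ∑ i ∈ F, X i x}).toReal
      ≤ Real.exp (-2 * (m - F.card * q) ^ 2 / F.card) := by
  set s : ℝ := (F.card : ℝ) with hs
  have hs0 : (0:ℝ) < s := by rw [hs]; exact_mod_cast hF
  set a : ℝ := m - s * q with hadef
  set l : ℝ := 4 * a / s with hldef
  have hl0 : 0 < l := by positivity
  have hint : Integrable (fun x => Real.exp (l * (∑ i ∈ F, X i) x)) μ := by
    simpa [Finset.sum_apply] using msAux_integrable_exp_sum X hmeas hbdd F l
  have hcher := measure_ge_le_exp_mul_mgf (X := ∑ i ∈ F, X i) (μ := μ) (t := l) m hl0.le hint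
  have hset : {x | m ≤ (∑ i ∈ F, X i) x} = {x | m ≤ ∑ i ∈ F, X i x} := by
    ext x; simp [Finset.sum_apply]
  rw [hset] at hcher
  refine le_trans hcher ?_
  have hprod : mgf (∑ i ∈ F, X i) μ l ≤ Real.exp (s * (q * l + l ^ 2 / 8)) := by
    rw [hind.mgf_sum hmeas F]
    calc ∏ i ∈ F, mgf (X i) μ l ≤ ∏ i ∈ F, Real.exp (q * l + l ^ 2 / 8) :=
      Finset.prod_le_prod (fun i _ => mgf_nonneg) (fun i hi => hmgf i hi l)
    _ = Real.exp (s * (q * l + l ^ 2 / 8)) := by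
        rw [Finset.prod_const, ← Real.exp_nat_mul, hs]
  calc Real.exp (-l * m) * mgf (∑ i ∈ F, X i) μ l
      ≤ Real.exp (-l * m) * Real.exp (s * (q * l + l ^ 2 / 8)) := by
        exact mul_le_mul_of_nonneg_left hprod (exp_pos _).le
  _ = Real.exp (-l * m + s * (q * l + l ^ 2 / 8)) := by rw [← Real.exp_add]
  _ = Real.exp (-2 * a ^ 2 / s) := by
        congr 1
        rw [hldef]
        field_simp
        ring
  _ = _ := by rw [hadef, hs]

lemma msAux_chernoff_lo (X : ι → Ω → ℝ)
    (hind : iIndepFun X μ) (hmeas : ∀ i, Measurable (X i))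
    (hbdd : ∀ i x, X i x ∈ Set.Icc (0:ℝ) 1) (F : Finset ι) (q m : ℝ)
    (hmgf : ∀ i ∈ F, ∀ l : ℝ, mgf (X i) μ l ≤ Real.exp (q * l + l ^ 2 / 8))
    (hF : 0 < F.card) (ha : 0 < F.card * q - m) :
    (μ {x | ∑ i ∈ F, X i x ≤ m}).toReal
      ≤ Real.exp (-2 * (F.card * q - m) ^ 2 / F.card) := by
  set s : ℝ := (F.card : ℝ) with hs
  have hs0 : (0:ℝ) < s := by rw [hs]; exact_mod_cast hF
  set a : ℝ := s * q - m with hadef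
  set l : ℝ := -(4 * a / s) with hldef
  have hl0 : l < 0 := by
    rw [hldef]; simp only [neg_neg, neg_lt_zero]; positivity
  have hint : Integrable (fun x => Real.exp (l * (∑ i ∈ F, X i) x)) μ := by
    simpa [Finset.sum_apply] using msAux_integrable_exp_sum X hmeas hbdd F l
  have hcher := measure_le_le_exp_mul_mgf (X := ∑ i ∈ F, X i) (μ := μ) (t := l) m hl0.le hint
  have hset : {x | (∑ i ∈ F, X i) x ≤ m} = {x | ∑ i ∈ F, X i x ≤ m} := by
    ext x; simp [Finset.sum_apply]
  rw [hset] at hcher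
  refine le_trans hcher ?_
  have hprod : mgf (∑ i ∈ F, X i) μ l ≤ Real.exp (s * (q * l + l ^ 2 / 8)) := by
    rw [hind.mgf_sum hmeas F]
    calc ∏ i ∈ F, mgf (X i) μ l ≤ ∏ i ∈ F, Real.exp (q * l + l ^ 2 / 8) :=
      Finset.prod_le_prod (fun i _ => mgf_nonneg) (fun i hi => hmgf i hi l)
    _ = Real.exp (s * (q * l + l ^ 2 / 8)) := by
        rw [Finset.prod_const, ← Real.exp_nat_mul, hs]
  calc Real.exp (-l * m) * mgf (∑ i ∈ F, X i) μ l
      ≤ Real.exp (-l * m) * Real.exp (s * (q * l + l ^ 2 / 8)) := by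
        exact mul_le_mul_of_nonneg_left hprod (exp_pos _).le
  _ = Real.exp (-l * m + s * (q * l + l ^ 2 / 8)) := by rw [← Real.exp_add]
  _ = Real.exp (-2 * a ^ 2 / s) := by
        congr 1
        rw [hldef]
        field_simp
        ring
  _ = _ := by rw [hadef, hs]


lemma msAux_finset_meas {n : ℕ} (s : Set (Fin n)) : MeasurableSet s :=
  s.toFinite.measurableSet

section
variable {Ω : Type*} [MeasurableSpace Ω] (μ : Measure Ω) [IsProbabilityMeasure μ]
  {n T : ℕ}

lemma msAux_measure_setC (p : Fin n → ℝ) (hp0 : ∀ j, 0 ≤ p j)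
    (W : Ω → ℕ → Fin n) (hWmeas : ∀ t, Measurable fun x => W x t)
    (hdist : ∀ t, 1 ≤ t → t ≤ T → ∀ j, μ {x | W x t = j} = ENNReal.ofReal (p j))
    (C : Fin n → Prop) [DecidablePred C] (u : ℕ) (hu1 : 1 ≤ u) (huT : u ≤ T) :
    μ {x | C (W x u)} = ENNReal.ofReal (∑ j ∈ Finset.univ.filter C, p j) := by
  classical
  have hset : {x | C (W x u)} = ⋃ j ∈ Finset.univ.filter C, {x | W x u = j} := by
    ext x
    simp only [Set.mem_setOf_eq, Set.mem_iUnion, Finset.mem_filter, Finset.mem_univ, true_and]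
    exact ⟨fun h => ⟨W x u, h, rfl⟩, fun ⟨j, hj, he⟩ => he ▸ hj⟩
  rw [hset, measure_biUnion_finset ?_ ?_]
  · rw [Finset.sum_congr rfl fun j _ => hdist u hu1 huT j]
    exact (ENNReal.ofReal_sum_of_nonneg (fun j _ => hp0 j)).symm
  · intro a _ b _ hab
    simp only [Function.onFun, Set.disjoint_left]
    intro x hxa hxb
    exact hab (hxa.symm.trans hxb)
  · intro j _
    exact (hWmeas u) (measurableSet_singleton j)

lemma msAux_mgf_ind (C : Fin n → Prop) [DecidablePred C]
    (W : Ω → ℕ → Fin n) (hWmeas : ∀ t, Measurable fun x => W x t)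
    (u : ℕ) (l q : ℝ) (hq : (μ {x | C (W x u)}).toReal = q) :
    mgf (fun x => if C (W x u) then (1:ℝ) else 0) μ l = 1 + q * (Real.exp l - 1) := by
  classical
  have hE : MeasurableSet {x | C (W x u)} :=
    (hWmeas u) (msAux_finset_meas {v | C v})
  have hfe : (fun x => Real.exp (l * (if C (W x u) then (1:ℝ) else 0)))
      = fun x => (Real.exp l - 1) * ({x | C (W x u)}.indicator (fun _ => (1:ℝ)) x) + 1 := by
    funext x
    by_cases h : C (W x u)
    · simp [h, Set.indicator_apply, Set.mem_setOf_eq, mul_one]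
    · simp [h, Set.indicator_apply, Set.mem_setOf_eq]
  have hint : Integrable ({x | C (W x u)}.indicator (fun _ => (1:ℝ))) μ :=
    (integrable_const (1:ℝ)).indicator hE
  rw [mgf, hfe]
  rw [integral_add (hint.const_mul _) (integrable_const 1)]
  rw [MeasureTheory.integral_const_mul, integral_indicator_const (1:ℝ) hE]
  simp [hq]
  rw [measureReal_def, hq]
  ring
end

section
variable {Ω : Type*} [MeasurableSpace Ω] (μ : Measure Ω) [IsProbabilityMeasure μ]
  {n T : ℕ}

lemma msAux_cnt_sum (C : Fin n → Prop) [DecidablePred C]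
    (W : Ω → ℕ → Fin n) (s : ℕ) (hsT : s ≤ T) (x : Ω) :
    ((((Finset.Icc 1 s).filter (fun u => C (W x u))).card : ℝ))
      = ∑ u ∈ (Finset.Icc 1 s).subtype (· ∈ Finset.Icc 1 T),
          (if C (W x ((u : ℕ))) then (1:ℝ) else 0) := by
  classical
  rw [Finset.sum_subtype_eq_sum_filter (fun m => if C (W x m) then (1:ℝ) else 0)]
  have hfe : (Finset.Icc 1 s).filter (fun u => u ∈ Finset.Icc 1 T) = Finset.Icc 1 s :=
    Finset.filter_true_of_mem (fun u hu => by rw [Finset.mem_Icc] at hu ⊢; omega)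
  rw [hfe, Finset.card_filter]
  push_cast
  rfl

lemma msAux_cnt_card (s : ℕ) (hsT : s ≤ T) :
    ((Finset.Icc 1 s).subtype (· ∈ Finset.Icc 1 T)).card = s := by
  classical
  rw [Finset.card_subtype]
  have hfe : (Finset.Icc 1 s).filter (fun u => u ∈ Finset.Icc 1 T) = Finset.Icc 1 s :=
    Finset.filter_true_of_mem (fun u hu => by rw [Finset.mem_Icc] at hu ⊢; omega)
  rw [hfe]
  simp

lemma msAux_cnt_tail_up (p : Fin n → ℝ) (hp0 : ∀ j, 0 ≤ p j)
    (W : Ω → ℕ → Fin n) (hWmeas : ∀ t, Measurable fun x => W x t)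
    (hdist : ∀ t, 1 ≤ t → t ≤ T → ∀ j, μ {x | W x t = j} = ENNReal.ofReal (p j))
    (hindep : iIndepFun
      (fun (t : (Finset.Icc 1 T : Finset ℕ)) x => W x t) μ)
    (C : Fin n → Prop) [DecidablePred C]
    (q : ℝ) (hqdef : q = ∑ j ∈ Finset.univ.filter C, p j) (hq1 : q ≤ 1)
    (t b : ℕ) (ht2 : 2 ≤ t) (htT : t ≤ T)
    (ha : 0 < (b : ℝ) - (t - 1 : ℕ) * q) :
    (μ {x | b ≤ ((Finset.Icc 1 (t-1)).filter (fun u => C (W x u))).card}).toReal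
      ≤ Real.exp (-2 * ((b : ℝ) - (t - 1 : ℕ) * q) ^ 2 / (t - 1 : ℕ)) := by
  classical
  set Y : (Finset.Icc 1 T : Finset ℕ) → Ω → ℝ :=
    fun u x => if C (W x ((u : ℕ))) then (1:ℝ) else 0 with hY
  have hYind : iIndepFun Y μ := by
    refine hindep.comp (fun _ => fun v : Fin n => if C v then (1:ℝ) else 0) ?_
    intro i
    exact measurable_of_countable _
  have hYmeas : ∀ u, Measurable (Y u) := fun u =>
    (measurable_of_countable (fun v : Fin n => if C v then (1:ℝ) else 0)).comp (hWmeas u)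
  have hYbdd : ∀ u x, Y u x ∈ Set.Icc (0:ℝ) 1 := by
    intro u x; rw [hY]; dsimp only; split <;> simp
  set F : Finset (Finset.Icc 1 T : Finset ℕ) :=
    (Finset.Icc 1 (t-1)).subtype (· ∈ Finset.Icc 1 T) with hF
  have hFcard : F.card = t - 1 := msAux_cnt_card (t-1) (by omega)
  have hq0 : 0 ≤ q := hqdef ▸ Finset.sum_nonneg fun j _ => hp0 j
  have hmgf : ∀ u ∈ F, ∀ l : ℝ, mgf (Y u) μ l ≤ Real.exp (q * l + l ^ 2 / 8) := by
    intro u hu l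
    have hu1 : 1 ≤ (u : ℕ) := (Finset.mem_Icc.1 u.2).1
    have huT : (u : ℕ) ≤ T := (Finset.mem_Icc.1 u.2).2
    have hμ : (μ {x | C (W x (u : ℕ))}).toReal = q := by
      rw [msAux_measure_setC μ p hp0 W hWmeas hdist C (u:ℕ) hu1 huT, hqdef,
        ENNReal.toReal_ofReal (Finset.sum_nonneg fun j _ => hp0 j)]
    rw [msAux_mgf_ind μ C W hWmeas (u:ℕ) l q hμ]
    exact msAux_bernoulli_mgf q hq0 hq1 l
  have hset : {x | b ≤ ((Finset.Icc 1 (t-1)).filter (fun u => C (W x u))).card}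
      = {x | (b:ℝ) ≤ ∑ u ∈ F, Y u x} := by
    ext x
    simp only [Set.mem_setOf_eq]
    rw [← msAux_cnt_sum C W (t-1) (by omega) x]
    exact ⟨fun h => by exact_mod_cast h, fun h => by exact_mod_cast h⟩
  rw [hset]
  have := msAux_chernoff_up Y hYind hYmeas hYbdd F q (b:ℝ) hmgf
    (by rw [hFcard]; omega) (by rw [hFcard]; exact ha)
  rwa [hFcard] at this

lemma msAux_cnt_tail_lo (p : Fin n → ℝ) (hp0 : ∀ j, 0 ≤ p j)
    (W : Ω → ℕ → Fin n) (hWmeas : ∀ t, Measurable fun x => W x t)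
    (hdist : ∀ t, 1 ≤ t → t ≤ T → ∀ j, μ {x | W x t = j} = ENNReal.ofReal (p j))
    (hindep : iIndepFun
      (fun (t : (Finset.Icc 1 T : Finset ℕ)) x => W x t) μ)
    (C : Fin n → Prop) [DecidablePred C]
    (q : ℝ) (hqdef : q = ∑ j ∈ Finset.univ.filter C, p j) (hq1 : q ≤ 1)
    (t b : ℕ) (ht2 : 2 ≤ t) (htT : t ≤ T) (hb1 : 1 ≤ b)
    (ha : 0 < (t - 1 : ℕ) * q - ((b : ℝ) - 1)) :
    (μ {x | ((Finset.Icc 1 (t-1)).filter (fun u => C (W x u))).card < b}).toReal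
      ≤ Real.exp (-2 * ((t - 1 : ℕ) * q - ((b : ℝ) - 1)) ^ 2 / (t - 1 : ℕ)) := by
  classical
  set Y : (Finset.Icc 1 T : Finset ℕ) → Ω → ℝ :=
    fun u x => if C (W x ((u : ℕ))) then (1:ℝ) else 0 with hY
  have hYind : iIndepFun Y μ := by
    refine hindep.comp (fun _ => fun v : Fin n => if C v then (1:ℝ) else 0) ?_
    intro i
    exact measurable_of_countable _
  have hYmeas : ∀ u, Measurable (Y u) := fun u =>
    (measurable_of_countable (fun v : Fin n => if C v then (1:ℝ) else 0)).comp (hWmeas u)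
  have hYbdd : ∀ u x, Y u x ∈ Set.Icc (0:ℝ) 1 := by
    intro u x; rw [hY]; dsimp only; split <;> simp
  set F : Finset (Finset.Icc 1 T : Finset ℕ) :=
    (Finset.Icc 1 (t-1)).subtype (· ∈ Finset.Icc 1 T) with hF
  have hFcard : F.card = t - 1 := msAux_cnt_card (t-1) (by omega)
  have hq0 : 0 ≤ q := hqdef ▸ Finset.sum_nonneg fun j _ => hp0 j
  have hmgf : ∀ u ∈ F, ∀ l : ℝ, mgf (Y u) μ l ≤ Real.exp (q * l + l ^ 2 / 8) := by
    intro u hu l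
    have hu1 : 1 ≤ (u : ℕ) := (Finset.mem_Icc.1 u.2).1
    have huT : (u : ℕ) ≤ T := (Finset.mem_Icc.1 u.2).2
    have hμ : (μ {x | C (W x (u : ℕ))}).toReal = q := by
      rw [msAux_measure_setC μ p hp0 W hWmeas hdist C (u:ℕ) hu1 huT, hqdef,
        ENNReal.toReal_ofReal (Finset.sum_nonneg fun j _ => hp0 j)]
    rw [msAux_mgf_ind μ C W hWmeas (u:ℕ) l q hμ]
    exact msAux_bernoulli_mgf q hq0 hq1 l
  have hset : {x | ((Finset.Icc 1 (t-1)).filter (fun u => C (W x u))).card < b}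
      = {x | ∑ u ∈ F, Y u x ≤ (b:ℝ) - 1} := by
    ext x
    simp only [Set.mem_setOf_eq]
    rw [← msAux_cnt_sum C W (t-1) (by omega) x]
    constructor
    · intro h
      have : (((Finset.Icc 1 (t-1)).filter (fun u => C (W x u))).card : ℝ) + 1 ≤ (b:ℝ) := by
        exact_mod_cast h
      linarith
    · intro h
      have : (((Finset.Icc 1 (t-1)).filter (fun u => C (W x u))).card : ℝ) + 1 ≤ (b:ℝ) := by
        linarith
      exact_mod_cast this
  rw [hset]
  have := msAux_chernoff_lo Y hYind hYmeas hYbdd F q ((b:ℝ) - 1) hmgf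
    (by rw [hFcard]; omega) (by rw [hFcard]; exact ha)
  rwa [hFcard] at this

end

open scoped Classical in
noncomputable def msBudget {n : ℕ} (p : Fin n → ℝ) (B T : ℕ) : ℕ → (ℕ → Fin n) → ℕ
  | 0, _ => B
  | (k+1), ω => msBudget p B T k ω -
      (if fluidAccept p (T - k) (ω (T - k)) (msBudget p B T k ω) then 1 else 0)

namespace msAux
open scoped Classical
variable {n : ℕ} (p : Fin n → ℝ) (B T : ℕ)

lemma budget_le : ∀ k ω, msBudget p B T k ω ≤ B := by
  intro k
  induction k with
  | zero => intro ω; simp [msBudget]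
  | succ k ih => intro ω; rw [msBudget]; exact le_trans (Nat.sub_le _ _) (ih ω)

lemma budget_spec {Ω : Type*} (W : Ω → ℕ → Fin n) (Bt : ℕ → Ω → ℕ)
    (hBT : ∀ x, Bt T x = B)
    (hBt : ∀ x t, 1 ≤ t → t ≤ T →
      Bt (t - 1) x = Bt t x - (if fluidAccept p t (W x t) (Bt t x) then 1 else 0)) :
    ∀ k, k ≤ T → ∀ x, Bt (T - k) x = msBudget p B T k (W x) := by
  intro k
  induction k with
  | zero => intro _ x; simpa [msBudget] using hBT x
  | succ k ih =>
    intro hk x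
    have hk' : k ≤ T := by omega
    have h1 : 1 ≤ T - k := by omega
    have h2 : T - k ≤ T := by omega
    have := hBt x (T - k) h1 h2
    have he : T - (k + 1) = T - k - 1 := by omega
    rw [he, this, ih hk' x, msBudget]

lemma budget_local : ∀ k, k ≤ T → ∀ ω ω' : ℕ → Fin n,
    (∀ u, T - k < u → u ≤ T → ω u = ω' u) → msBudget p B T k ω = msBudget p B T k ω' := by
  intro k
  induction k with
  | zero => intro _ ω ω' _; simp [msBudget]
  | succ k ih =>
    intro hk ω ω' hagree
    have hk' : k ≤ T := by omega
    have hsub : msBudget p B T k ω = msBudget p B T k ω' := by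
      refine ih hk' ω ω' fun u hu1 hu2 => hagree u (by omega) hu2
    rw [msBudget, msBudget, hsub, hagree (T - k) (by omega) (by omega)]

lemma budget_meas {Ω : Type*} [MeasurableSpace Ω] (W : Ω → ℕ → Fin n)
    (hWmeas : ∀ t, Measurable fun x => W x t) :
    ∀ k, Measurable fun x => msBudget p B T k (W x) := by
  intro k
  induction k with
  | zero => simp only [msBudget]; exact measurable_const
  | succ k ih =>
    have hpair : Measurable fun x => (W x (T - k), msBudget p B T k (W x)) :=
      (hWmeas (T - k)).prodMk ih
    have hfn : Measurable (fun y : Fin n × ℕ =>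
        y.2 - (if fluidAccept p (T - k) y.1 y.2 then 1 else 0)) :=
      measurable_of_countable _
    exact hfn.comp hpair

lemma voff_meas {Ω : Type*} [MeasurableSpace Ω] (r : Fin n → ℝ) (W : Ω → ℕ → Fin n)
    (hWmeas : ∀ t, Measurable fun x => W x t) :
    ∀ t b, Measurable fun x => msVoff r (W x) t b := by
  intro t
  induction t with
  | zero => intro b; simp only [msVoff]; exact measurable_const
  | succ t ih =>
    intro b
    cases b with
    | zero => simp only [msVoff]; exact measurable_const
    | succ b =>
      simp only [msVoff]
      exact (((measurable_of_countable r).comp (hWmeas (t+1))).add (ih b)).max (ih (b+1))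

lemma cnt_meas {Ω : Type*} [MeasurableSpace Ω] (W : Ω → ℕ → Fin n)
    (hWmeas : ∀ t, Measurable fun x => W x t) (C : Fin n → Prop) (s : ℕ) :
    Measurable fun x => ((Finset.Icc 1 s).filter (fun u => C (W x u))).card := by
  have : (fun x => ((Finset.Icc 1 s).filter (fun u => C (W x u))).card)
      = fun x => ∑ u ∈ Finset.Icc 1 s, (if C (W x u) then 1 else 0) := by
    funext x; rw [Finset.card_filter]
  rw [this]
  refine Finset.measurable_sum _ fun u _ => ?_
  exact (measurable_of_countable (fun v : Fin n => if C v then (1:ℕ) else 0)).comp (hWmeas u)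

end msAux

namespace msAux

variable {n : ℕ} (r : Fin n → ℝ) (ω ω' : ℕ → Fin n)

lemma cnt_congr (c : ℝ) (s : ℕ) (h : ∀ u ∈ Finset.Icc 1 s, ω u = ω' u) :
    cntGT r ω c s = cntGT r ω' c s ∧ cntGE r ω c s = cntGE r ω' c s := by
  classical
  constructor
  · rw [cntGT, cntGT]
    congr 1
    refine Finset.filter_congr fun u hu => ?_
    rw [h u hu]
  · rw [cntGE, cntGE]
    congr 1
    refine Finset.filter_congr fun u hu => ?_
    rw [h u hu]

lemma devProp_congr (p : Fin n → ℝ) (t : ℕ) (j : Fin n) (b : ℕ)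
    (h : ∀ u ∈ Finset.Icc 1 (t - 1), ω u = ω' u) :
    devProp r ω p t j b → devProp r ω' p t j b := by
  intro hd
  rw [devProp] at hd ⊢
  rcases cnt_congr r ω ω' (r j) (t - 1) h with ⟨h1, h2⟩
  rw [← h1, ← h2]
  exact hd

end msAux

namespace msAux

lemma natset_meas (s : Set ℕ) : MeasurableSet s := s.to_countable.measurableSet

lemma sum_telescope_Icc (f : ℕ → ℝ) : ∀ N, ∑ t ∈ Finset.Icc 1 N, (f t - f (t - 1)) = f N - f 0 := by
  intro N
  induction N with
  | zero => simp
  | succ N ih =>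
    rw [← Finset.insert_Icc_right_eq_Icc_add_one (by omega : 1 ≤ N + 1), Finset.sum_insert (by simp)]
    rw [ih]
    simp only [Nat.add_sub_cancel]
    ring

lemma dev_meas {Ω : Type*} [MeasurableSpace Ω] {n : ℕ} (r : Fin n → ℝ) (p : Fin n → ℝ)
    (W : Ω → ℕ → Fin n) (hWmeas : ∀ t, Measurable fun x => W x t) (t : ℕ) (j : Fin n) (b : ℕ) :
    MeasurableSet {x | devProp r (W x) p t j b} := by
  classical
  by_cases hacc : fluidAccept p t j b
  · have he : {x | devProp r (W x) p t j b}
        = (fun x => ((Finset.Icc 1 (t-1)).filter (fun u => r j < r (W x u))).card) ⁻¹'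
            {m | b ≤ m} := by
      ext x
      simp only [devProp, if_pos hacc, cntGT, Set.mem_preimage, Set.mem_setOf_eq]
    rw [he]
    exact (cnt_meas W hWmeas (fun v => r j < r v) (t-1)) (natset_meas _)
  · have he : {x | devProp r (W x) p t j b}
        = (fun x => ((Finset.Icc 1 (t-1)).filter (fun u => r j ≤ r (W x u))).card) ⁻¹'
            {m | m < b} := by
      ext x
      simp only [devProp, if_neg hacc, cntGE, Set.mem_preimage, Set.mem_setOf_eq]
    rw [he]
    exact (cnt_meas W hWmeas (fun v => r j ≤ r v) (t-1)) (natset_meas _)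

end msAux

open Real in
set_option maxHeartbeats 1000000 in
lemma msAux_event_bound {Ω : Type*} [MeasurableSpace Ω] (μ : Measure Ω) [IsProbabilityMeasure μ]
    {n T B : ℕ} (hn : 0 < n)
    (r : Fin n → ℝ) (hr0 : ∀ j, 0 ≤ r j) (hrmono : ∀ j k : Fin n, j ≤ k → r k ≤ r j)
    (p : Fin n → ℝ) (hp : ∀ j, 0 < p j ∧ p j ≤ 1) (hpsum : ∑ j, p j = 1)
    (W : Ω → ℕ → Fin n)
    (hWmeas : ∀ t, Measurable fun x => W x t)
    (hdist : ∀ t, 1 ≤ t → t ≤ T → ∀ j, μ {x | W x t = j} = ENNReal.ofReal (p j))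
    (hindep : iIndepFun
      (fun (t : (Finset.Icc 1 T : Finset ℕ)) x => W x t) μ)
    (Bt : ℕ → Ω → ℕ)
    (hBrep : ∀ t, t ≤ T → ∀ x, Bt t x = msBudget p B T (T - t) (W x))
    (t : ℕ) (j : Fin n) (b : ℕ)
    (ht1 : 1 ≤ t) (htT : t ≤ T) (hj : 1 ≤ (j : ℕ)) (hb1 : 1 ≤ b) (hbB : b ≤ B) :
    (μ {x | W x t = j ∧ Bt t x = b ∧ msAux.devProp r (W x) p t j b}).toReal
      ≤ (μ {x | Bt t x = b}).toReal
          * (p j * (Real.exp (-(p j ^ 2 / 2))) ^ (t + 1)) := by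
  classical
  have hp0 : ∀ i, 0 ≤ p i := fun i => (hp i).1.le
  set pbar : ℝ := ∑ i ∈ Finset.univ.filter (fun i => i ≤ j), p i with hpbar
  have hpbar_le_one : pbar ≤ 1 := by
    rw [hpbar, ← hpsum]
    exact Finset.sum_le_sum_of_subset_of_nonneg (Finset.subset_univ _)
      (fun i _ _ => hp0 i)
  have hpbar_ge : p j ≤ pbar := by
    rw [hpbar]
    exact Finset.single_le_sum (fun i _ => hp0 i)
      (Finset.mem_filter.2 ⟨Finset.mem_univ _, le_refl j⟩)
  -- t = 1 case : the event is empty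
  rcases eq_or_lt_of_le ht1 with ht1' | ht2
  · have hacc : fluidAccept p t j b := by
      refine ⟨hb1, Or.inr ?_⟩
      rw [← ht1']
      have hb1R : (1:ℝ) ≤ (b:ℝ) := by exact_mod_cast hb1
      have : (b:ℝ) / (1:ℕ) = (b:ℝ) := by norm_num
      rw [this]
      have hpj : 0 < p j := (hp j).1
      linarith [hpbar_le_one, hpj]
    have hdev_false : ∀ x, ¬ msAux.devProp r (W x) p t j b := by
      intro x hd
      rw [msAux.devProp, if_pos hacc] at hd
      rw [← ht1'] at hd
      simp [msAux.cntGT] at hd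
      omega
    have hempty : {x | W x t = j ∧ Bt t x = b ∧ msAux.devProp r (W x) p t j b} = ∅ := by
      ext x
      simp only [Set.mem_setOf_eq, Set.mem_empty_iff_false, iff_false]
      rintro ⟨-, -, hd⟩
      exact hdev_false x hd
    rw [hempty]
    simp only [measure_empty, ENNReal.toReal_zero]
    exact mul_nonneg ENNReal.toReal_nonneg
      (mul_nonneg (hp0 j) (pow_nonneg (Real.exp_pos _).le _))
  -- t ≥ 2
  have ht2' : 2 ≤ t := ht2
  have hteq : T - (T - t) = t := by omega
  -- split off the budget event
  have happ1 : μ {x | W x t = j ∧ Bt t x = b ∧ msAux.devProp r (W x) p t j b}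
      = μ {x | Bt t x = b}
        * μ {x | W x t = j ∧ msAux.devProp r (W x) p t j b} := by
    have hEeq : {x | W x t = j ∧ Bt t x = b ∧ msAux.devProp r (W x) p t j b}
        = {x | msBudget p B T (T - t) (W x) = b}
          ∩ {x | W x t = j ∧ msAux.devProp r (W x) p t j b} := by
      ext x
      simp only [Set.mem_setOf_eq, Set.mem_inter_iff]
      rw [← hBrep t htT x]
      tauto
    have hBeq : {x | Bt t x = b} = {x | msBudget p B T (T - t) (W x) = b} := by
      ext x
      simp only [Set.mem_setOf_eq]
      rw [hBrep t htT x]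
    rw [hEeq, hBeq]
    refine msAux_block_indep μ hn W hWmeas hindep (Finset.Ioc t T) (Finset.Icc 1 t)
      ?_ ?_ ?_ (fun ω => msBudget p B T (T - t) ω = b)
      (fun ω => ω t = j ∧ msAux.devProp r ω p t j b) ?_ ?_
    · intro u hu
      rw [Finset.mem_Ioc] at hu
      rw [Finset.mem_Icc]
      omega
    · intro u hu
      rw [Finset.mem_Icc] at hu ⊢
      omega
    · rw [Finset.disjoint_left]
      intro u hu hu'
      rw [Finset.mem_Ioc] at hu
      rw [Finset.mem_Icc] at hu'
      omega
    · intro ω ω' hagree hP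
      have := msAux.budget_local p B T (T - t) (by omega) ω ω' ?_
      · rw [← this]; exact hP
      · intro u hu1 hu2
        refine hagree u ?_
        rw [Finset.mem_Ioc]
        rw [hteq] at hu1
        exact ⟨hu1, hu2⟩
    · rintro ω ω' hagree ⟨hj', hd⟩
      have ht_mem : t ∈ Finset.Icc 1 t := Finset.mem_Icc.2 ⟨ht1, le_refl t⟩
      refine ⟨by rw [← hagree t ht_mem]; exact hj', ?_⟩
      refine msAux.devProp_congr r ω ω' p t j b ?_ hd
      intro u hu
      refine hagree u ?_
      rw [Finset.mem_Icc] at hu ⊢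
      omega
  have happ2 : μ {x | W x t = j ∧ msAux.devProp r (W x) p t j b}
      = μ {x | W x t = j} * μ {x | msAux.devProp r (W x) p t j b} := by
    have hEeq : {x | W x t = j ∧ msAux.devProp r (W x) p t j b}
        = {x | W x t = j} ∩ {x | msAux.devProp r (W x) p t j b} := rfl
    rw [hEeq]
    refine msAux_block_indep μ hn W hWmeas hindep {t} (Finset.Icc 1 (t-1))
      ?_ ?_ ?_ (fun ω => ω t = j) (fun ω => msAux.devProp r ω p t j b) ?_ ?_
    · intro u hu
      rw [Finset.mem_singleton] at hu
      rw [Finset.mem_Icc]; omega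
    · intro u hu
      rw [Finset.mem_Icc] at hu ⊢; omega
    · rw [Finset.disjoint_left]
      intro u hu hu'
      rw [Finset.mem_singleton] at hu
      rw [Finset.mem_Icc] at hu'
      omega
    · intro ω ω' hagree hP
      rw [← hagree t (Finset.mem_singleton_self t)]
      exact hP
    · intro ω ω' hagree hd
      exact msAux.devProp_congr r ω ω' p t j b hagree hd
  have hWj : μ {x | W x t = j} = ENNReal.ofReal (p j) := hdist t ht1 htT j
  have htR2 : (2:ℝ) ≤ (t:ℝ) := by exact_mod_cast ht2'
  have htcast : ((t - 1 : ℕ) : ℝ) = (t:ℝ) - 1 := by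
    rw [Nat.cast_sub ht1]
    norm_num
  have htpos : (0:ℝ) < (t:ℝ) := by linarith
  have hpj : 0 < p j := (hp j).1
  have hdev : (μ {x | msAux.devProp r (W x) p t j b}).toReal
      ≤ (Real.exp (-(p j ^ 2 / 2))) ^ (t + 1) := by
    have hexp_target : (Real.exp (-(p j ^ 2 / 2))) ^ (t + 1)
        = Real.exp (((t + 1 : ℕ) : ℝ) * (-(p j ^ 2 / 2))) := by
      rw [Real.exp_nat_mul]
    by_cases haccept : fluidAccept p t j b
    · -- accept case : upper tail of the strictly-better count
      set C : Fin n → Prop := fun v => r j < r v with hC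
      set qA : ℝ := ∑ i ∈ Finset.univ.filter C, p i with hqA
      have hq1 : qA ≤ 1 := by
        rw [hqA, ← hpsum]
        exact Finset.sum_le_sum_of_subset_of_nonneg (Finset.subset_univ _) (fun i _ _ => hp0 i)
      have hthr : pbar - p j / 2 ≤ (b:ℝ) / (t:ℝ) := by
        rcases haccept.2 with h0 | h
        · omega
        · exact h
      have hb_ge : (pbar - p j / 2) * (t:ℝ) ≤ (b:ℝ) := (le_div_iff₀ htpos).1 hthr
      have hqA_le : qA ≤ pbar - p j := by
        have hsubset : Finset.univ.filter C ⊆ Finset.univ.filter (fun i => i < j) := by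
          intro i hi
          rw [Finset.mem_filter] at hi ⊢
          refine ⟨Finset.mem_univ _, ?_⟩
          by_contra hij
          push_neg at hij
          exact absurd (hrmono j i hij) (not_le.2 hi.2)
        have hsplit : pbar = p j + ∑ i ∈ Finset.univ.filter (fun i => i < j), p i := by
          rw [hpbar]
          have : Finset.univ.filter (fun i : Fin n => i ≤ j)
              = insert j (Finset.univ.filter (fun i => i < j)) := by
            ext i
            simp only [Finset.mem_filter, Finset.mem_univ, true_and, Finset.mem_insert]
            rw [le_iff_lt_or_eq]
            tauto
          rw [this, Finset.sum_insert (by simp)]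
        have := Finset.sum_le_sum_of_subset_of_nonneg hsubset (fun i _ _ => hp0 i)
        rw [hqA]
        linarith
      have hkey : (t:ℝ) * (p j / 2) ≤ (b:ℝ) - ((t - 1 : ℕ) : ℝ) * qA := by
        rw [htcast]
        nlinarith [mul_le_mul_of_nonneg_left hqA_le (by linarith : (0:ℝ) ≤ (t:ℝ) - 1)]
      have hapos : 0 < (b:ℝ) - ((t - 1 : ℕ) : ℝ) * qA := by
        nlinarith [hkey, mul_pos htpos (by linarith : (0:ℝ) < p j / 2)]
      have hsetdev : {x | msAux.devProp r (W x) p t j b}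
          = {x | b ≤ ((Finset.Icc 1 (t-1)).filter (fun u => C (W x u))).card} := by
        ext x
        simp only [Set.mem_setOf_eq, msAux.devProp, if_pos haccept, msAux.cntGT,
          Finset.filter_congr_decidable]
        simp [hC]
      rw [hsetdev]
      refine le_trans (msAux_cnt_tail_up μ p hp0 W hWmeas hdist hindep C qA hqA hq1
        t b ht2' htT hapos) ?_
      rw [hexp_target, Real.exp_le_exp]
      rw [htcast, div_le_iff₀ (by linarith : (0:ℝ) < (t:ℝ) - 1)]
      have ha2 : ((t:ℝ) * (p j / 2)) ^ 2 ≤ ((b:ℝ) - ((t - 1 : ℕ) : ℝ) * qA) ^ 2 := by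
        refine pow_le_pow_left₀ (by positivity) hkey 2
      rw [htcast] at ha2
      push_cast
      nlinarith [sq_nonneg (p j)]
    · -- reject case : lower tail of the at-least-as-good count
      set C : Fin n → Prop := fun v => r j ≤ r v with hC
      set qR : ℝ := ∑ i ∈ Finset.univ.filter C, p i with hqR
      have hq1 : qR ≤ 1 := by
        rw [hqR, ← hpsum]
        exact Finset.sum_le_sum_of_subset_of_nonneg (Finset.subset_univ _) (fun i _ _ => hp0 i)
      have hnot : ¬ ((j : ℕ) = 0 ∨ pbar - p j / 2 ≤ (b:ℝ) / (t:ℝ)) :=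
        fun h => haccept ⟨hb1, h⟩
      push_neg at hnot
      have hblt : (b:ℝ) < (pbar - p j / 2) * (t:ℝ) := (div_lt_iff₀ htpos).1 hnot.2
      have hqR_ge : pbar ≤ qR := by
        rw [hqR, hpbar]
        refine Finset.sum_le_sum_of_subset_of_nonneg ?_ (fun i _ _ => hp0 i)
        intro i hi
        rw [Finset.mem_filter] at hi ⊢
        exact ⟨Finset.mem_univ _, hrmono i j hi.2⟩
      have hkey : (t:ℝ) * (p j / 2) ≤ ((t - 1 : ℕ) : ℝ) * qR - ((b:ℝ) - 1) := by
        rw [htcast]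
        nlinarith [mul_le_mul_of_nonneg_left hqR_ge (by linarith : (0:ℝ) ≤ (t:ℝ) - 1),
          hpbar_le_one]
      have hapos : 0 < ((t - 1 : ℕ) : ℝ) * qR - ((b:ℝ) - 1) := by
        nlinarith [hkey, mul_pos htpos (by linarith : (0:ℝ) < p j / 2)]
      have hsetdev : {x | msAux.devProp r (W x) p t j b}
          = {x | ((Finset.Icc 1 (t-1)).filter (fun u => C (W x u))).card < b} := by
        ext x
        simp only [Set.mem_setOf_eq, msAux.devProp, if_neg haccept, msAux.cntGE,
          Finset.filter_congr_decidable]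
        simp [hC]
      rw [hsetdev]
      refine le_trans (msAux_cnt_tail_lo μ p hp0 W hWmeas hdist hindep C qR hqR hq1
        t b ht2' htT hb1 hapos) ?_
      rw [hexp_target, Real.exp_le_exp]
      rw [htcast, div_le_iff₀ (by linarith : (0:ℝ) < (t:ℝ) - 1)]
      have ha2 : ((t:ℝ) * (p j / 2)) ^ 2 ≤ (((t - 1 : ℕ) : ℝ) * qR - ((b:ℝ) - 1)) ^ 2 := by
        refine pow_le_pow_left₀ (by positivity) hkey 2
      rw [htcast] at ha2
      push_cast
      nlinarith [sq_nonneg (p j)]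
  -- assemble
  rw [happ1, happ2, hWj]
  rw [ENNReal.toReal_mul, ENNReal.toReal_mul]
  rw [ENNReal.toReal_ofReal (hp0 j)]
  refine mul_le_mul_of_nonneg_left ?_ ENNReal.toReal_nonneg
  exact mul_le_mul_of_nonneg_left hdev (hp0 j)

end msAuxAll

open scoped Classical in
/-- **Fluid Bayes Selector for the multi-secretary problem** (multinomial arrivals): its
expected regret is at most `rmax · Σ_{j≥2} 2/p_j ≤ 2(n−1)·rmax / min_j p_j`. -/
theorem multisecretary_fluid_bayes_selector
    {Ω : Type*} [MeasurableSpace Ω] (μ : Measure Ω) [IsProbabilityMeasure μ]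
    (n T B : ℕ) (hn : 0 < n)
    (r : Fin n → ℝ) (hr0 : ∀ j, 0 ≤ r j) (hrmono : ∀ j k : Fin n, j ≤ k → r k ≤ r j)
    (p : Fin n → ℝ) (hp : ∀ j, 0 < p j ∧ p j ≤ 1) (hpsum : ∑ j, p j = 1)
    (pmin : ℝ) (hpmin : IsLeast {y : ℝ | ∃ j : Fin n, y = p j} pmin)
    -- i.i.d. multinomial arrivals: `W x t` is the type θ^t
    (W : Ω → ℕ → Fin n)
    (hWmeas : ∀ t, Measurable fun x => W x t)
    (hdist : ∀ t, 1 ≤ t → t ≤ T → ∀ j, μ {x | W x t = j} = ENNReal.ofReal (p j))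
    (hindep : iIndepFun
      (fun (t : (Finset.Icc 1 T : Finset ℕ)) x => W x t) μ)
    -- the remaining-budget process of the Fluid Bayes Selector
    (Bt : ℕ → Ω → ℕ)
    (hBT : ∀ x, Bt T x = B)
    (hBt : ∀ x t, 1 ≤ t → t ≤ T →
      Bt (t - 1) x = Bt t x - (if fluidAccept p t (W x t) (Bt t x) then 1 else 0)) :
    (∫ x, (msVoff r (W x) T B
        - ∑ t ∈ Finset.Icc 1 T,
            (if fluidAccept p t (W x t) (Bt t x) then r (W x t) else 0)) ∂μ)
      ≤ r ⟨0, hn⟩ * ∑ j ∈ Finset.univ.filter (fun j : Fin n => 1 ≤ (j : ℕ)), 2 / p j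
    ∧ r ⟨0, hn⟩ * ∑ j ∈ Finset.univ.filter (fun j : Fin n => 1 ≤ (j : ℕ)), 2 / p j
        ≤ 2 * ((n : ℝ) - 1) * r ⟨0, hn⟩ / pmin := by
  classical
  set rmax := r ⟨0, hn⟩ with hrmaxdef
  have hrle : ∀ j, r j ≤ rmax := fun j => hrmono ⟨0, hn⟩ j (by simp [Fin.le_def])
  have hrm : (0:ℝ) ≤ rmax := hr0 _
  have hj0 : ∀ j : Fin n, (j : ℕ) = 0 → r j = rmax := by
    intro j hj
    have : j = ⟨0, hn⟩ := Fin.ext hj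
    rw [this]
  have hp0 : ∀ j, 0 ≤ p j := fun j => (hp j).1.le
  have hpminpos : 0 < pmin := by
    obtain ⟨j, hj⟩ := hpmin.1
    rw [hj]; exact (hp j).1
  constructor
  · -- main regret bound
    have hBrep : ∀ t, t ≤ T → ∀ x, Bt t x = msBudget p B T (T - t) (W x) := by
      intro t ht x
      have h := msAux.budget_spec p B T W Bt hBT hBt (T - t) (by omega) x
      rwa [show T - (T - t) = t by omega] at h
    have hBle : ∀ t, t ≤ T → ∀ x, Bt t x ≤ B := by
      intro t ht x
      rw [hBrep t ht x]
      exact msAux.budget_le p B T _ _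
    have hBtmeas : ∀ t, t ≤ T → Measurable fun x => Bt t x := by
      intro t ht
      have he : (fun x => Bt t x) = fun x => msBudget p B T (T - t) (W x) :=
        funext fun x => hBrep t ht x
      rw [he]
      exact msAux.budget_meas p B T W hWmeas _
    have hVmeas : ∀ t b, Measurable fun x => msVoff r (W x) t b := msAux.voff_meas r W hWmeas
    have hVBmeas : ∀ t, t ≤ T → Measurable fun x => msVoff r (W x) t (Bt t x) := by
      intro t ht
      have he : (fun x => msVoff r (W x) t (Bt t x))
          = fun x => ∑ b ∈ Finset.range (B + 1), if Bt t x = b then msVoff r (W x) t b else 0 := by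
        funext x
        rw [Finset.sum_ite_eq (Finset.range (B + 1)) (Bt t x) (fun b => msVoff r (W x) t b)]
        rw [if_pos (Finset.mem_range.2 (by have := hBle t ht x; omega))]
      rw [he]
      refine Finset.measurable_sum _ fun b _ => ?_
      exact Measurable.ite ((hBtmeas t ht) (measurableSet_singleton b)) (hVmeas t b)
        measurable_const
    have hRmeas : ∀ t, t ≤ T →
        Measurable fun x => (if fluidAccept p t (W x t) (Bt t x) then r (W x t) else 0) := by
      intro t ht
      have hpair : Measurable fun x => (W x t, Bt t x) := (hWmeas t).prodMk (hBtmeas t ht)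
      exact (measurable_of_countable
        (fun y : Fin n × ℕ => if fluidAccept p t y.1 y.2 then r y.1 else 0)).comp hpair
    have hVbdd : ∀ t x, t ≤ T → |msVoff r (W x) t (Bt t x)| ≤ (B:ℝ) * rmax := by
      intro t x ht
      rw [abs_of_nonneg (msAux.voff_nonneg r (W x) hr0 _ _)]
      refine le_trans (msAux.voff_le r (W x) rmax hrle hrm t (Bt t x)) ?_
      have hc : ((Bt t x : ℕ) : ℝ) ≤ (B : ℝ) := by exact_mod_cast hBle t ht x
      nlinarith
    have hLint : ∀ t, 1 ≤ t → t ≤ T → Integrable (fun x =>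
        msVoff r (W x) t (Bt t x)
          - (if fluidAccept p t (W x t) (Bt t x) then r (W x t) else 0)
          - msVoff r (W x) (t - 1) (Bt (t - 1) x)) μ := by
      intro t ht1 htT
      have hm : Measurable (fun x =>
          msVoff r (W x) t (Bt t x)
            - (if fluidAccept p t (W x t) (Bt t x) then r (W x t) else 0)
            - msVoff r (W x) (t - 1) (Bt (t - 1) x)) :=
        ((hVBmeas t htT).sub (hRmeas t htT)).sub (hVBmeas (t - 1) (by omega))
      refine Integrable.mono' (integrable_const ((B:ℝ) * rmax + rmax + (B:ℝ) * rmax))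
        hm.aestronglyMeasurable (ae_of_all _ fun x => ?_)
      rw [Real.norm_eq_abs]
      have h1 := hVbdd t x htT
      have h2 := hVbdd (t - 1) x (by omega)
      have h3 : |if fluidAccept p t (W x t) (Bt t x) then r (W x t) else 0| ≤ rmax := by
        split
        · rw [abs_of_nonneg (hr0 _)]; exact hrle _
        · simpa using hrm
      rw [abs_le] at h1 h2 h3 ⊢
      constructor <;> [linarith [h1.1, h2.2, h3.2]; linarith [h1.2, h2.1, h3.1]]
    have hdecomp : ∀ x, msVoff r (W x) T B
        - ∑ t ∈ Finset.Icc 1 T, (if fluidAccept p t (W x t) (Bt t x) then r (W x t) else 0)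
        = ∑ t ∈ Finset.Icc 1 T, (msVoff r (W x) t (Bt t x)
            - (if fluidAccept p t (W x t) (Bt t x) then r (W x t) else 0)
            - msVoff r (W x) (t - 1) (Bt (t - 1) x)) := by
      intro x
      have hre : ∀ t ∈ Finset.Icc 1 T, (msVoff r (W x) t (Bt t x)
            - (if fluidAccept p t (W x t) (Bt t x) then r (W x t) else 0)
            - msVoff r (W x) (t - 1) (Bt (t - 1) x))
          = (msVoff r (W x) t (Bt t x) - msVoff r (W x) (t - 1) (Bt (t - 1) x))
            - (if fluidAccept p t (W x t) (Bt t x) then r (W x t) else 0) := by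
        intro t _
        ring
      rw [Finset.sum_congr rfl hre, Finset.sum_sub_distrib,
        msAux.sum_telescope_Icc (fun t => msVoff r (W x) t (Bt t x)) T]
      have h0 : msVoff r (W x) 0 (Bt 0 x) = 0 := by simp [msVoff]
      have hT : msVoff r (W x) T (Bt T x) = msVoff r (W x) T B := by rw [hBT x]
      rw [h0, hT]
      ring
    have hEmeas : ∀ t, t ≤ T → ∀ (j : Fin n) (b : ℕ),
        MeasurableSet {x | W x t = j ∧ Bt t x = b ∧ msAux.devProp r (W x) p t j b} := by
      intro t ht j b
      have h1 : MeasurableSet {x | W x t = j} := (hWmeas t) (measurableSet_singleton j)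
      have h2 : MeasurableSet {x | Bt t x = b} := (hBtmeas t ht) (measurableSet_singleton b)
      have h3 := msAux.dev_meas r p W hWmeas t j b
      have he : {x | W x t = j ∧ Bt t x = b ∧ msAux.devProp r (W x) p t j b}
          = {x | W x t = j} ∩ ({x | Bt t x = b} ∩ {x | msAux.devProp r (W x) p t j b}) := rfl
      rw [he]
      exact h1.inter (h2.inter h3)
    have hUint : ∀ t, t ≤ T → ∀ (j : Fin n) (b : ℕ), Integrable (fun x =>
        if (W x t = j ∧ Bt t x = b ∧ msAux.devProp r (W x) p t j b) then rmax else 0) μ := by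
      intro t ht j b
      have he : (fun x => if (W x t = j ∧ Bt t x = b ∧ msAux.devProp r (W x) p t j b)
            then rmax else 0)
          = ({x | W x t = j ∧ Bt t x = b ∧ msAux.devProp r (W x) p t j b}).indicator
              (fun _ => rmax) := by
        funext x
        rw [Set.indicator_apply]
        rfl
      rw [he]
      exact (integrable_const rmax).indicator (hEmeas t ht j b)
    have hUeval : ∀ t, t ≤ T → ∀ (j : Fin n) (b : ℕ),
        ∫ x, (if (W x t = j ∧ Bt t x = b ∧ msAux.devProp r (W x) p t j b)
            then rmax else 0) ∂μ
        = (μ {x | W x t = j ∧ Bt t x = b ∧ msAux.devProp r (W x) p t j b}).toReal * rmax := by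
      intro t ht j b
      have he : (fun x => if (W x t = j ∧ Bt t x = b ∧ msAux.devProp r (W x) p t j b)
            then rmax else 0)
          = ({x | W x t = j ∧ Bt t x = b ∧ msAux.devProp r (W x) p t j b}).indicator
              (fun _ => rmax) := by
        funext x
        rw [Set.indicator_apply]
        rfl
      rw [he, integral_indicator_const rmax (hEmeas t ht j b), smul_eq_mul, measureReal_def]
    have hstep : ∀ t ∈ Finset.Icc 1 T, (∫ x, (msVoff r (W x) t (Bt t x)
          - (if fluidAccept p t (W x t) (Bt t x) then r (W x t) else 0)
          - msVoff r (W x) (t - 1) (Bt (t - 1) x)) ∂μ)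
        ≤ ∑ j ∈ Finset.univ.filter (fun j : Fin n => 1 ≤ (j : ℕ)), ∑ b ∈ Finset.Icc 1 B,
            (μ {x | W x t = j ∧ Bt t x = b ∧ msAux.devProp r (W x) p t j b}).toReal * rmax := by
      intro t htm
      rw [Finset.mem_Icc] at htm
      obtain ⟨ht1, htT⟩ := htm
      have hle : ∀ x, msVoff r (W x) t (Bt t x)
          - (if fluidAccept p t (W x t) (Bt t x) then r (W x t) else 0)
          - msVoff r (W x) (t - 1) (Bt (t - 1) x)
          ≤ ∑ j ∈ Finset.univ.filter (fun j : Fin n => 1 ≤ (j : ℕ)), ∑ b ∈ Finset.Icc 1 B,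
              (if (W x t = j ∧ Bt t x = b ∧ msAux.devProp r (W x) p t j b)
                then rmax else 0) := by
        intro x
        have hgb := msAux.grid_bound r (W x) p rmax hr0 hrle hrm hj0 B t (Bt t x) ht1
          (hBle t htT x)
        rw [← hBt x t ht1 htT] at hgb
        exact hgb
      have hUint' : Integrable (fun x =>
          ∑ j ∈ Finset.univ.filter (fun j : Fin n => 1 ≤ (j : ℕ)), ∑ b ∈ Finset.Icc 1 B,
            (if (W x t = j ∧ Bt t x = b ∧ msAux.devProp r (W x) p t j b)
              then rmax else 0)) μ :=
        integrable_finset_sum _ (fun j _ => integrable_finset_sum _ (fun b _ => hUint t htT j b))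
      refine le_trans (integral_mono (hLint t ht1 htT) hUint' hle) ?_
      rw [integral_finset_sum _ (fun j _ => integrable_finset_sum _ (fun b _ => hUint t htT j b))]
      refine le_of_eq (Finset.sum_congr rfl fun j _ => ?_)
      rw [integral_finset_sum _ (fun b _ => hUint t htT j b)]
      exact Finset.sum_congr rfl fun b _ => hUeval t htT j b
    -- the probability bound for each event
    have hEbound : ∀ t ∈ Finset.Icc 1 T,
        ∀ j ∈ Finset.univ.filter (fun j : Fin n => 1 ≤ (j : ℕ)), ∀ b ∈ Finset.Icc 1 B,
        (μ {x | W x t = j ∧ Bt t x = b ∧ msAux.devProp r (W x) p t j b}).toReal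
          ≤ (μ {x | Bt t x = b}).toReal
              * (p j * (Real.exp (-(p j ^ 2 / 2))) ^ (t + 1)) := by
      intro t htm j hjm b hbm
      rw [Finset.mem_Icc] at htm hbm
      rw [Finset.mem_filter] at hjm
      exact msAux_event_bound μ hn r hr0 hrmono p hp hpsum W hWmeas hdist hindep Bt hBrep
        t j b htm.1 htm.2 hjm.2 hbm.1 hbm.2
    have hAb : ∀ t ∈ Finset.Icc 1 T,
        ∑ b ∈ Finset.Icc 1 B, (μ {x | Bt t x = b}).toReal ≤ 1 := by
      intro t htm
      rw [Finset.mem_Icc] at htm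
      have hmeasb : ∀ b : ℕ, MeasurableSet {x | Bt t x = b} :=
        fun b => (hBtmeas t htm.2) (measurableSet_singleton b)
      have hdisj : (Finset.Icc 1 B : Set ℕ).PairwiseDisjoint
          (fun b => {x | Bt t x = b}) := by
        intro a _ c _ hac
        simp only [Function.onFun, Set.disjoint_left, Set.mem_setOf_eq]
        intro x hxa hxc
        exact hac (hxa.symm.trans hxc)
      have hsum : ∑ b ∈ Finset.Icc 1 B, μ {x | Bt t x = b}
          = μ (⋃ b ∈ Finset.Icc 1 B, {x | Bt t x = b}) :=
        (measure_biUnion_finset hdisj fun b _ => hmeasb b).symm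
      have h1 : ∑ b ∈ Finset.Icc 1 B, (μ {x | Bt t x = b}).toReal
          = (∑ b ∈ Finset.Icc 1 B, μ {x | Bt t x = b}).toReal := by
        rw [ENNReal.toReal_sum (fun b _ => measure_ne_top μ _)]
      rw [h1, hsum]
      calc (μ (⋃ b ∈ Finset.Icc 1 B, {x | Bt t x = b})).toReal
          ≤ (1 : ENNReal).toReal := ENNReal.toReal_mono ENNReal.one_ne_top prob_le_one
      _ = 1 := by simp
    -- per-type geometric sum bound
    have hgeom : ∀ j ∈ Finset.univ.filter (fun j : Fin n => 1 ≤ (j : ℕ)),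
        (∑ t ∈ Finset.Icc 1 T, (Real.exp (-(p j ^ 2 / 2))) ^ (t + 1)) * p j ≤ 2 / p j := by
      intro j _
      set y : ℝ := Real.exp (-(p j ^ 2 / 2)) with hy
      have hpj : 0 < p j := (hp j).1
      have hz : (0:ℝ) < p j ^ 2 / 2 := by positivity
      have hy0 : 0 < y := Real.exp_pos _
      have hy1 : y < 1 := by
        rw [hy]
        exact Real.exp_lt_one_iff.2 (by linarith)
      have hzy : p j ^ 2 / 2 * y ≤ 1 - y := by
        have h1 := Real.add_one_le_exp (p j ^ 2 / 2)
        have h2 : (p j ^ 2 / 2 + 1) * y ≤ Real.exp (p j ^ 2 / 2) * y :=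
          mul_le_mul_of_nonneg_right h1 hy0.le
        rw [hy] at h2 ⊢
        rw [← Real.exp_add] at h2
        simp only [add_neg_cancel, Real.exp_zero] at h2
        nlinarith
      have hsum : ∑ t ∈ Finset.Icc 1 T, y ^ (t + 1) ≤ y ^ 2 / (1 - y) := by
        have hre : ∑ t ∈ Finset.Icc 1 T, y ^ (t + 1)
            = y ^ 2 * ∑ i ∈ Finset.range T, y ^ i := by
          rw [← Finset.Ico_add_one_right_eq_Icc, Finset.sum_Ico_eq_sum_range]
          rw [Finset.mul_sum]
          refine Finset.sum_congr (by norm_num) fun i _ => ?_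
          ring
        rw [hre]
        have hgs : ∑ i ∈ Finset.range T, y ^ i ≤ 1 / (1 - y) := by
          rw [geom_sum_eq hy1.ne T]
          have he : (y ^ T - 1) / (y - 1) = (1 - y ^ T) / (1 - y) := by
            rw [← neg_div_neg_eq]
            ring_nf
          rw [he]
          have hyT : 0 ≤ y ^ T := by positivity
          gcongr
          · linarith
        calc y ^ 2 * ∑ i ∈ Finset.range T, y ^ i ≤ y ^ 2 * (1 / (1 - y)) := by
              exact mul_le_mul_of_nonneg_left hgs (by positivity)
        _ = y ^ 2 / (1 - y) := by ring
      have hfin : y ^ 2 / (1 - y) ≤ 2 / p j ^ 2 := by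
        have h1 : y ^ 2 / (1 - y) ≤ y ^ 2 / (p j ^ 2 / 2 * y) :=
          div_le_div_of_nonneg_left (by positivity) (by positivity) hzy
        have h2 : y ^ 2 / (p j ^ 2 / 2 * y) = y * (2 / p j ^ 2) := by
          field_simp
        have h3 : y * (2 / p j ^ 2) ≤ 1 * (2 / p j ^ 2) :=
          mul_le_mul_of_nonneg_right (by linarith) (by positivity)
        rw [h2] at h1
        linarith
      calc (∑ t ∈ Finset.Icc 1 T, y ^ (t + 1)) * p j ≤ (y ^ 2 / (1 - y)) * p j :=
            mul_le_mul_of_nonneg_right hsum hpj.le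
      _ ≤ (2 / p j ^ 2) * p j := mul_le_mul_of_nonneg_right hfin hpj.le
      _ = 2 / p j := by
            field_simp
    -- assemble everything
    have hmain : (∫ x, (msVoff r (W x) T B
          - ∑ t ∈ Finset.Icc 1 T,
              (if fluidAccept p t (W x t) (Bt t x) then r (W x t) else 0)) ∂μ)
        = ∑ t ∈ Finset.Icc 1 T, ∫ x, (msVoff r (W x) t (Bt t x)
            - (if fluidAccept p t (W x t) (Bt t x) then r (W x t) else 0)
            - msVoff r (W x) (t - 1) (Bt (t - 1) x)) ∂μ := by
      rw [show (fun x => msVoff r (W x) T B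
          - ∑ t ∈ Finset.Icc 1 T,
              (if fluidAccept p t (W x t) (Bt t x) then r (W x t) else 0))
          = fun x => ∑ t ∈ Finset.Icc 1 T, (msVoff r (W x) t (Bt t x)
            - (if fluidAccept p t (W x t) (Bt t x) then r (W x t) else 0)
            - msVoff r (W x) (t - 1) (Bt (t - 1) x)) from funext hdecomp]
      exact integral_finset_sum _ fun t htm => hLint t (Finset.mem_Icc.1 htm).1
        (Finset.mem_Icc.1 htm).2
    rw [hmain]
    calc ∑ t ∈ Finset.Icc 1 T, ∫ x, (msVoff r (W x) t (Bt t x)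
            - (if fluidAccept p t (W x t) (Bt t x) then r (W x t) else 0)
            - msVoff r (W x) (t - 1) (Bt (t - 1) x)) ∂μ
        ≤ ∑ t ∈ Finset.Icc 1 T,
            ∑ j ∈ Finset.univ.filter (fun j : Fin n => 1 ≤ (j : ℕ)), ∑ b ∈ Finset.Icc 1 B,
            (μ {x | W x t = j ∧ Bt t x = b ∧ msAux.devProp r (W x) p t j b}).toReal * rmax :=
          Finset.sum_le_sum hstep
    _ ≤ ∑ t ∈ Finset.Icc 1 T,
          ∑ j ∈ Finset.univ.filter (fun j : Fin n => 1 ≤ (j : ℕ)), ∑ b ∈ Finset.Icc 1 B,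
          (μ {x | Bt t x = b}).toReal
            * (p j * (Real.exp (-(p j ^ 2 / 2))) ^ (t + 1)) * rmax := by
        refine Finset.sum_le_sum fun t htm => Finset.sum_le_sum fun j hjm =>
          Finset.sum_le_sum fun b hbm => ?_
        exact mul_le_mul_of_nonneg_right (hEbound t htm j hjm b hbm) hrm
    _ = ∑ j ∈ Finset.univ.filter (fun j : Fin n => 1 ≤ (j : ℕ)), ∑ t ∈ Finset.Icc 1 T,
          (∑ b ∈ Finset.Icc 1 B, (μ {x | Bt t x = b}).toReal)
            * (p j * (Real.exp (-(p j ^ 2 / 2))) ^ (t + 1) * rmax) := by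
        rw [Finset.sum_comm]
        refine Finset.sum_congr rfl fun j _ => Finset.sum_congr rfl fun t _ => ?_
        rw [Finset.sum_mul]
        refine Finset.sum_congr rfl fun b _ => ?_
        ring
    _ ≤ ∑ j ∈ Finset.univ.filter (fun j : Fin n => 1 ≤ (j : ℕ)), ∑ t ∈ Finset.Icc 1 T,
          (p j * (Real.exp (-(p j ^ 2 / 2))) ^ (t + 1) * rmax) := by
        refine Finset.sum_le_sum fun j _ => Finset.sum_le_sum fun t htm => ?_
        have h1 := hAb t htm
        have h2 : 0 ≤ p j * (Real.exp (-(p j ^ 2 / 2))) ^ (t + 1) * rmax := by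
          have := hp0 j
          positivity
        nlinarith [Finset.sum_nonneg (fun b (_ : b ∈ Finset.Icc 1 B) =>
          (ENNReal.toReal_nonneg : (0:ℝ) ≤ (μ {x | Bt t x = b}).toReal))]
    _ ≤ ∑ j ∈ Finset.univ.filter (fun j : Fin n => 1 ≤ (j : ℕ)), rmax * (2 / p j) := by
        refine Finset.sum_le_sum fun j hjm => ?_
        have h1 := hgeom j hjm
        have he : ∑ t ∈ Finset.Icc 1 T, (p j * (Real.exp (-(p j ^ 2 / 2))) ^ (t + 1) * rmax)
            = ((∑ t ∈ Finset.Icc 1 T, (Real.exp (-(p j ^ 2 / 2))) ^ (t + 1)) * p j) * rmax := by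
          rw [Finset.sum_mul, Finset.sum_mul]
          refine Finset.sum_congr rfl fun t _ => ?_
          ring
        rw [he]
        calc ((∑ t ∈ Finset.Icc 1 T, (Real.exp (-(p j ^ 2 / 2))) ^ (t + 1)) * p j) * rmax
            ≤ (2 / p j) * rmax := mul_le_mul_of_nonneg_right h1 hrm
        _ = rmax * (2 / p j) := by ring
    _ = rmax * ∑ j ∈ Finset.univ.filter (fun j : Fin n => 1 ≤ (j : ℕ)), 2 / p j := by
        rw [Finset.mul_sum]
  · -- second inequality
    have hcard : (Finset.univ.filter (fun j : Fin n => 1 ≤ (j : ℕ))).card = n - 1 := by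
      have hneg : (Finset.univ.filter (fun j : Fin n => ¬ 1 ≤ (j : ℕ))) = {⟨0, hn⟩} := by
        ext i
        simp only [Finset.mem_filter, Finset.mem_univ, true_and, Finset.mem_singleton, not_le,
          Nat.lt_one_iff]
        constructor
        · intro h; exact Fin.ext h
        · intro h; rw [h]
      have := Finset.card_filter_add_card_filter_not
        (s := (Finset.univ : Finset (Fin n))) (p := fun j : Fin n => 1 ≤ (j : ℕ))
      rw [hneg] at this
      simp only [Finset.card_singleton, Finset.card_univ, Fintype.card_fin] at this
      omega
    have hsum_le : ∑ j ∈ Finset.univ.filter (fun j : Fin n => 1 ≤ (j : ℕ)), 2 / p j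
        ≤ (n - 1 : ℕ) * (2 / pmin) := by
      have h1 := Finset.sum_le_card_nsmul (Finset.univ.filter (fun j : Fin n => 1 ≤ (j : ℕ)))
        (fun j => 2 / p j) (2 / pmin) (fun j _ => by
          exact div_le_div_of_nonneg_left (by norm_num) hpminpos (hpmin.2 ⟨j, rfl⟩))
      rw [hcard] at h1
      rwa [nsmul_eq_mul] at h1
    calc rmax * ∑ j ∈ Finset.univ.filter (fun j : Fin n => 1 ≤ (j : ℕ)), 2 / p j
        ≤ rmax * ((n - 1 : ℕ) * (2 / pmin)) := mul_le_mul_of_nonneg_left hsum_le hrm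
    _ = 2 * ((n : ℝ) - 1) * rmax / pmin := by
        rw [Nat.cast_sub hn]
        push_cast
        field_simp
end

section
/- Tail bound for a sum of dependent Bernoulli random variables: Let X_1, …, X_T be random variables on a common probability space, each taking values in {0, 1}, with arbitrary dependence, and let q_1, …, q_T be real numbers with q_t ≥ P(X_t = 1) for each t. Define D = Σ_{t=1}^{T} X_t. Then for every d ∈ {1, …, T}, P(D ≥ d) ≤ Σ_{t=d}^{T} q_t. -/
/-!
On the event `d ≤ D` at least `d` of the indices `1, …, T` carry a one, and `d` distinct
positive integers cannot all lie below `d`; so some `X t` with `d ≤ t ≤ T` equals one.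
The event is therefore covered by `⋃_{t=d}^T {X t = 1}`, and the union bound finishes.
-/

open Finset MeasureTheory

theorem Finset.exists_le_mem_of_le_card {s : Finset ℕ} (hs : 0 ∉ s) {d : ℕ} (hd : 0 < d)
    (hcard : d ≤ #s) : ∃ t ∈ s, d ≤ t := by
  by_contra! hlt
  have hsub : s ⊆ Ico 1 d := fun t ht =>
    mem_Ico.2 ⟨Nat.pos_of_ne_zero fun h => hs (h ▸ ht), hlt t ht⟩
  have := card_le_card hsub
  rw [Nat.card_Ico] at this
  omega

theorem Finset.sum_eq_card_filter_eq_one {ι : Type*} (s : Finset ι) {f : ι → ℕ}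
    (hf : ∀ i, f i = 0 ∨ f i = 1) : ∑ i ∈ s, f i = #{i ∈ s | f i = 1} := by
  rw [card_filter]
  refine sum_congr rfl fun i _ => ?_
  rcases hf i with h | h <;> simp [h]

theorem exists_eq_one_of_le_sum_Icc {X : ℕ → ℕ} (hX : ∀ t, X t = 0 ∨ X t = 1) {T d : ℕ}
    (hd : 0 < d) (hsum : d ≤ ∑ t ∈ Icc 1 T, X t) : ∃ t ∈ Icc d T, X t = 1 := by
  rw [sum_eq_card_filter_eq_one _ hX] at hsum
  obtain ⟨t, ht, hdt⟩ := exists_le_mem_of_le_card (by simp) hd hsum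
  rw [mem_filter, mem_Icc] at ht
  exact ⟨t, mem_Icc.2 ⟨hdt, ht.1.2⟩, ht.2⟩

theorem dependent_bernoulli_tail_bound_general
    {Ω : Type*} [MeasurableSpace Ω] (μ : Measure Ω) [IsProbabilityMeasure μ]
    (T : ℕ) (X : ℕ → Ω → ℕ)
    (hber : ∀ t ω, X t ω = 0 ∨ X t ω = 1)
    (q : ℕ → ℝ)
    (hq : ∀ t, 1 ≤ t → t ≤ T → (μ {ω | X t ω = 1}).toReal ≤ q t) :
    ∀ d, 1 ≤ d → d ≤ T →
      (μ {ω | d ≤ ∑ t ∈ Finset.Icc 1 T, X t ω}).toReal ≤ ∑ t ∈ Finset.Icc d T, q t := by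
  intro d hd _
  have hcover : {ω | d ≤ ∑ t ∈ Icc 1 T, X t ω} ⊆ ⋃ t ∈ Icc d T, {ω | X t ω = 1} :=
    fun ω hω => by
      simpa using exists_eq_one_of_le_sum_Icc (fun t => hber t ω) hd hω
  calc μ.real {ω | d ≤ ∑ t ∈ Icc 1 T, X t ω}
      ≤ μ.real (⋃ t ∈ Icc d T, {ω | X t ω = 1}) := measureReal_mono hcover (measure_ne_top μ _)
    _ ≤ ∑ t ∈ Icc d T, μ.real {ω | X t ω = 1} := measureReal_biUnion_finset_le _ _
    _ ≤ ∑ t ∈ Icc d T, q t := sum_le_sum fun t ht =>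
        hq t (hd.trans (mem_Icc.1 ht).1) (mem_Icc.1 ht).2

/-- **Tail bound for a sum of dependent Bernoulli random variables**: if `X 1, …, X T` are
{0,1}-valued random variables (arbitrarily dependent) and `q t ≥ P(X t = 1)` for each
`t ∈ [T]`, then `D = Σ_{t=1}^T X t` satisfies `P(D ≥ d) ≤ Σ_{t=d}^T q t` for every
`d ∈ {1, …, T}`. -/
theorem dependent_bernoulli_tail_bound
    {Ω : Type*} [MeasurableSpace Ω] (μ : Measure Ω) [IsProbabilityMeasure μ]
    (T : ℕ) (X : ℕ → Ω → ℕ)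
    (hX : ∀ t, Measurable (X t))
    (hber : ∀ t ω, X t ω = 0 ∨ X t ω = 1)
    (q : ℕ → ℝ)
    (hq : ∀ t, 1 ≤ t → t ≤ T → (μ {ω | X t ω = 1}).toReal ≤ q t) :
    ∀ d, 1 ≤ d → d ≤ T →
      (μ {ω | d ≤ ∑ t ∈ Finset.Icc 1 T, X t ω}).toReal ≤ ∑ t ∈ Finset.Icc d T, q t :=
  dependent_bernoulli_tail_bound_general μ T X hber q hq
end

section
/- Lipschitz property with constant 1 for the matching LP: Fix d, n ∈ ℕ, rewards r ∈ ℝ₊^{d×n}, an adjacency matrix a ∈ {0,1}^{d×n}, and b ∈ ℝ₊^d. For z ∈ ℝ₊ⁿ let P[z, b] be the LP: maximize Σ_{i∈[d], j∈[n]} x_ij r_ij a_ij subject to Σ_{j∈[n]} x_ij ≤ b_i for all i ∈ [d], Σ_{i∈[d]} x_ij ≤ z_j for all j ∈ [n], and x ≥ 0. Then for any z¹, z² ∈ ℝ₊ⁿ and any optimal solution x¹ of P[z¹, b], there exists an optimal solution x² of P[z², b] such that ‖x¹ − x²‖_∞ ≤ ‖z¹ − z²‖₁. -/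
/-!
Among the optimal solutions of `P[z₂, b]` take `x₂` closest to `x₁` in `ℓ¹`, and route
`y = x₁ - x₂` as a circulation `hub → row i → column j → hub`. Call the hub arc of column `j`
tight if `y` leaves through it while `x₂` saturates `z₂ j`, or enters through it while `x₁`
saturates `z₁ j`. A nonzero circulation running along `y` off the tight arcs could be pushed:
`x₂` moves along it and `x₁` against it, both stay feasible, so optimality of both fixes the
objective, and `x₂` gets closer to `x₁`. Hence there is none, and then cutting along the
vertices that reach the tail of an arc shows that each entry of `y` is at most the flow of `y`
on tight arcs; on the tight arc of column `j` that flow is at most `|z₁ j - z₂ j|`.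
-/

open Finset Relation Filter Topology

lemma IsCompact.exists_isMinOn_isMaxOn {X : Type*} [TopologicalSpace X] {K : Set X}
    (hK : IsCompact K) (hne : K.Nonempty) {f g : X → ℝ} (hf : Continuous f) (hg : Continuous g) :
    ∃ x ∈ K, IsMaxOn f K x ∧ IsMinOn g {y ∈ K | IsMaxOn f K y} x := by
  obtain ⟨x₀, hx₀, hmax₀⟩ := hK.exists_isMaxOn hne hf.continuousOn
  have hS : IsCompact {y ∈ K | f x₀ ≤ f y} := hK.inter_right (isClosed_le continuous_const hf)
  obtain ⟨x, ⟨hxK, hx⟩, hmin⟩ := hS.exists_isMinOn ⟨x₀, hx₀, le_rfl⟩ hg.continuousOn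
  exact ⟨x, hxK, fun y hy => (hmax₀ hy).trans hx, fun y ⟨hyK, hy⟩ => hmin ⟨hyK, hy hx₀⟩⟩

lemma eventually_add_mul_le {p q c : ℝ} (hp : p ≤ c) (hq : 0 < q → p < c) :
    ∀ᶠ ε in 𝓝[>] (0 : ℝ), p + ε * q ≤ c := by
  rcases le_or_gt q 0 with hq0 | hq0
  · filter_upwards [self_mem_nhdsWithin] with ε (hε : 0 < ε)
    nlinarith
  · have hlim : Tendsto (fun ε : ℝ => p + ε * q) (𝓝[>] 0) (𝓝 (p + 0 * q)) :=
      ((continuous_const.add (continuous_id.mul continuous_const)).tendsto 0).mono_left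
        nhdsWithin_le_nhds
    rw [zero_mul, add_zero] at hlim
    exact (hlim.eventually (gt_mem_nhds (hq hq0))).mono fun _ => le_of_lt

lemma eventually_abs_sub_mul_le {p q : ℝ} (hpos : 0 < q → 0 < p) (hneg : q < 0 → p < 0) :
    ∀ᶠ ε in 𝓝[>] (0 : ℝ), |p - ε * q| ≤ |p| - ε * |q| := by
  rcases lt_trichotomy q 0 with hq | rfl | hq
  · filter_upwards [eventually_add_mul_le (p := p) (q := -q) (c := 0) (hneg hq).le
      fun _ => hneg hq] with ε hε
    rw [abs_of_nonpos (by linarith), abs_of_neg (hneg hq), abs_of_neg hq]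
    linarith
  · simp
  · filter_upwards [eventually_add_mul_le (p := -p) (q := q) (c := 0) (by linarith [hpos hq])
      fun _ => by linarith [hpos hq]] with ε hε
    rw [abs_of_nonneg (by linarith), abs_of_pos (hpos hq), abs_of_pos hq]

section Circulation

variable {V : Type*}

section Arc

variable [DecidableEq V]

def arcFlow (u v : V) : V → V → ℝ := fun a b =>
  (if a = u ∧ b = v then 1 else 0) - (if a = v ∧ b = u then 1 else 0)

lemma arcFlow_swap (u v a b : V) : arcFlow u v b a = -arcFlow u v a b := by
  simp only [arcFlow, and_comm]; ring

lemma eq_of_arcFlow_pos {u v a b : V} (h : 0 < arcFlow u v a b) : a = u ∧ b = v := by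
  by_contra hne
  simp only [arcFlow, if_neg hne] at h
  split_ifs at h <;> linarith

end Arc

variable [Fintype V]

structure IsCirculation (φ : V → V → ℝ) : Prop where
  swap : ∀ u v, φ v u = -φ u v
  sum_eq_zero : ∀ u, ∑ v, φ u v = 0

lemma IsCirculation.eq_zero_of_eq_zero {φ χ : V → V → ℝ} (hφ : IsCirculation φ)
    (hχ : IsCirculation χ) (hpos : ∀ a b, 0 < χ a b → 0 < φ a b) {a b : V} (h : φ a b = 0) :
    χ a b = 0 := by
  by_contra hne
  rcases lt_or_gt_of_ne hne with hlt | hgt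
  · have := hpos b a (by rw [hχ.swap]; linarith)
    rw [hφ.swap, h] at this
    linarith
  · linarith [hpos a b hgt]

open Classical in
noncomputable def positiveFlowOn (G : V → V → Prop) (φ : V → V → ℝ) : ℝ :=
  ∑ a, ∑ b, if G a b then (φ a b)⁺ else 0

variable [DecidableEq V]

lemma sum_arcFlow (u v a : V) :
    ∑ b, arcFlow u v a b = (if a = u then 1 else 0) - (if a = v then 1 else 0) := by
  simp [arcFlow, ite_and, Finset.sum_sub_distrib]

structure IsUnitFlow (P : V → V → Prop) (u t : V) (χ : V → V → ℝ) : Prop where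
  swap : ∀ a b, χ b a = -χ a b
  sum_eq : ∀ a, ∑ b, χ a b = (if a = u then 1 else 0) - (if a = t then 1 else 0)
  pos : ∀ a b, 0 < χ a b → P a b

lemma IsUnitFlow.arcFlow_add {P : V → V → Prop} {u w t : V} {χ : V → V → ℝ}
    (hχ : IsUnitFlow P w t χ) (huw : P u w) : IsUnitFlow P u t (arcFlow u w + χ) where
  swap a b := by
    rw [Pi.add_apply, Pi.add_apply, Pi.add_apply, Pi.add_apply, arcFlow_swap, hχ.swap]; ring
  sum_eq a := by simp only [Pi.add_apply, Finset.sum_add_distrib, sum_arcFlow, hχ.sum_eq]; ring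
  pos a b hab := by
    by_cases h : 0 < arcFlow u w a b
    · obtain ⟨rfl, rfl⟩ := eq_of_arcFlow_pos h
      exact huw
    · exact hχ.pos a b (by simp only [Pi.add_apply] at hab; linarith)

lemma IsUnitFlow.isCirculation {P : V → V → Prop} {u : V} {χ : V → V → ℝ}
    (hχ : IsUnitFlow P u u χ) : IsCirculation χ :=
  ⟨hχ.swap, fun a => by rw [hχ.sum_eq, sub_self]⟩

lemma exists_isUnitFlow_of_reflTransGen {P : V → V → Prop} {u t : V}
    (hut : ReflTransGen P u t) : ∃ χ, IsUnitFlow P u t χ := by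
  induction hut using ReflTransGen.head_induction_on with
  | refl => exact ⟨0, by simp, by simp, by simp⟩
  | head huw _ ih =>
    obtain ⟨χ, hχ⟩ := ih
    exact ⟨_, hχ.arcFlow_add huw⟩

lemma not_reflTransGen_of_circulation_eq_zero {φ : V → V → ℝ} (hφ : IsCirculation φ)
    {P : V → V → Prop} (hP : ∀ a b, P a b → 0 < φ a b)
    (hcirc : ∀ χ : V → V → ℝ, IsCirculation χ → (∀ a b, 0 < χ a b → P a b) → χ = 0)
    {u v : V} (huv : P u v) : ¬ ReflTransGen P v u := by
  intro hvu
  obtain ⟨χ, hχ⟩ := exists_isUnitFlow_of_reflTransGen hvu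
  have hne : u ≠ v := by rintro rfl; linarith [hP u u huv, hφ.swap u u]
  have hχuv : 0 ≤ χ u v := by
    by_contra! hneg
    have := hP v u (hχ.pos v u (by rw [hχ.swap]; linarith))
    linarith [hP u v huv, hφ.swap u v]
  have hcycle := hχ.arcFlow_add huv
  have := congrFun (congrFun (hcirc _ hcycle.isCirculation hcycle.pos) u) v
  simp only [Pi.add_apply, arcFlow, and_self, ↓reduceIte, hne, false_and, sub_zero,
    Pi.zero_apply] at this
  linarith

lemma IsCirculation.sum_sum_compl_eq_zero {φ : V → V → ℝ} (hφ : IsCirculation φ) (U : Finset V) :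
    ∑ u ∈ U, ∑ v ∈ Uᶜ, φ u v = 0 := by
  have hinner : ∑ u ∈ U, ∑ v ∈ U, φ u v = 0 := by
    have h : ∑ u ∈ U, ∑ v ∈ U, φ u v = -∑ u ∈ U, ∑ v ∈ U, φ u v := by
      conv_lhs => rw [Finset.sum_comm]
      simp only [← Finset.sum_neg_distrib]
      exact sum_congr rfl fun _ _ => sum_congr rfl fun _ _ => hφ.swap _ _
    linarith
  have hall : ∑ u ∈ U, ∑ v, φ u v = 0 := Finset.sum_eq_zero fun u _ => hφ.sum_eq_zero u
  simp only [← Finset.sum_add_sum_compl U, Finset.sum_add_distrib, hinner, zero_add] at hall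
  exact hall

/-- Cut along the set `U` of vertices that reach `t` off `G`: the flow leaving `U` through
`(t, h)` must re-enter `U`, and it can only do so through `G`. -/
theorem le_positiveFlowOn {φ : V → V → ℝ} (hφ : IsCirculation φ) (G : V → V → Prop)
    (hcirc : ∀ χ : V → V → ℝ, IsCirculation χ →
      (∀ a b, 0 < χ a b → 0 < φ a b ∧ ¬ G a b) → χ = 0)
    (t h : V) : φ t h ≤ positiveFlowOn G φ := by
  classical
  set P : V → V → Prop := fun a b => 0 < φ a b ∧ ¬ G a b
  have hterm : ∀ a b, 0 ≤ if G a b then (φ a b)⁺ else 0 := fun a b => by positivity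
  by_cases hG : G t h
  · calc φ t h ≤ if G t h then (φ t h)⁺ else 0 := (if_pos hG).symm ▸ le_posPart _
      _ ≤ positiveFlowOn G φ :=
        (single_le_sum (fun b _ => hterm t b) (mem_univ h)).trans
          (single_le_sum (f := fun a => ∑ b, if G a b then (φ a b)⁺ else 0)
            (fun a _ => sum_nonneg fun b _ => hterm a b) (mem_univ t))
  by_cases hpos : φ t h ≤ 0
  · exact hpos.trans (sum_nonneg fun a _ => sum_nonneg fun b _ => hterm a b)
  set U : Finset V := univ.filter fun v => ReflTransGen P v t
  have htU : t ∈ U := by simpa [U] using ReflTransGen.refl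
  have hhU : h ∈ Uᶜ := by
    simpa [U] using not_reflTransGen_of_circulation_eq_zero hφ (fun a b hab => hab.1) hcirc
      ⟨not_le.1 hpos, hG⟩
  have hclosed : ∀ u ∈ U, ∀ v ∈ Uᶜ, ¬ P v u := fun u hu v hv hvu => by
    simp only [U, mem_compl, mem_filter, mem_univ, true_and] at hu hv
    exact hv (hu.head hvu)
  have hsplit : ∀ u v, (φ u v)⁺ = φ u v + (φ v u)⁺ := fun u v => by
    rw [hφ.swap u v, posPart_neg]; linarith [posPart_sub_negPart (φ u v)]
  calc φ t h ≤ ∑ u ∈ U, ∑ v ∈ Uᶜ, (φ u v)⁺ :=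
        (le_posPart _).trans <| (single_le_sum (fun _ _ => posPart_nonneg _) hhU).trans
          (single_le_sum (f := fun u => ∑ v ∈ Uᶜ, (φ u v)⁺)
            (fun _ _ => sum_nonneg fun _ _ => posPart_nonneg _) htU)
    _ = ∑ u ∈ U, ∑ v ∈ Uᶜ, (φ v u)⁺ := by
      rw [sum_congr rfl fun u _ => sum_congr rfl fun v _ => hsplit u v]
      simp only [sum_add_distrib, hφ.sum_sum_compl_eq_zero U, zero_add]
    _ = ∑ u ∈ U, ∑ v ∈ Uᶜ, if G v u then (φ v u)⁺ else 0 := by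
      refine sum_congr rfl fun u hu => sum_congr rfl fun v hv => ?_
      by_cases hvu : G v u
      · rw [if_pos hvu]
      · rw [if_neg hvu, posPart_eq_zero]
        exact not_lt.1 fun hlt => hclosed u hu v hv ⟨hlt, hvu⟩
    _ ≤ ∑ u, ∑ v, if G v u then (φ v u)⁺ else 0 :=
      (sum_le_sum fun u _ => sum_le_sum_of_subset_of_nonneg (subset_univ _)
          fun v _ _ => hterm v u).trans
        (sum_le_sum_of_subset_of_nonneg (subset_univ _)
          fun u _ _ => sum_nonneg fun v _ => hterm v u)
    _ = positiveFlowOn G φ := sum_comm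

end Circulation

namespace MatchingLP

variable {d n : ℕ}

/-- `x` as a circulation on rows, columns and a hub `none`: the mass `x i j` travels
`none → row i → column j → none`. -/
def flow (x : Fin d → Fin n → ℝ) : Option (Fin d ⊕ Fin n) → Option (Fin d ⊕ Fin n) → ℝ
  | some (.inl i), some (.inr j) => x i j
  | some (.inr j), some (.inl i) => -x i j
  | none, some (.inl i) => ∑ j, x i j
  | some (.inl i), none => -∑ j, x i j
  | some (.inr j), none => ∑ i, x i j
  | none, some (.inr j) => -∑ i, x i j
  | _, _ => 0

lemma isCirculation_flow (x : Fin d → Fin n → ℝ) : IsCirculation (flow x) :=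
  ⟨by rintro (_ | _ | _) (_ | _ | _) <;> simp [flow],
   by
    rintro (_ | _ | _) <;> simp only [flow, Fintype.sum_option, Fintype.sum_sum_type]
    · rw [Finset.sum_neg_distrib, zero_add, add_neg_eq_zero]; exact Finset.sum_comm
    all_goals simp⟩

lemma flow_zero : flow (0 : Fin d → Fin n → ℝ) = 0 := by
  ext (_ | _ | _) (_ | _ | _) <;> simp [flow]

lemma flow_eq_of_isCirculation {χ : Option (Fin d ⊕ Fin n) → Option (Fin d ⊕ Fin n) → ℝ}
    (hχ : IsCirculation χ) (hrow : ∀ i i', χ (some (.inl i)) (some (.inl i')) = 0)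
    (hcol : ∀ j j', χ (some (.inr j)) (some (.inr j')) = 0) :
    flow (fun i j => χ (some (.inl i)) (some (.inr j))) = χ := by
  have hrowSum : ∀ i, ∑ j, χ (some (.inl i)) (some (.inr j)) = χ none (some (.inl i)) := by
    intro i
    have := hχ.sum_eq_zero (some (.inl i))
    simp only [Fintype.sum_option, Fintype.sum_sum_type, hrow, Finset.sum_const_zero] at this
    linarith [hχ.swap none (some (.inl i))]
  have hcolSum : ∀ j, ∑ i, χ (some (.inl i)) (some (.inr j)) = χ (some (.inr j)) none := by
    intro j
    have := hχ.sum_eq_zero (some (.inr j))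
    simp only [Fintype.sum_option, Fintype.sum_sum_type, hcol, Finset.sum_const_zero,
      add_zero, fun i => hχ.swap (some (.inl i)) (some (.inr j)), Finset.sum_neg_distrib] at this
    linarith
  ext (_ | i | j) (_ | i' | j')
  · show 0 = _; linarith [hχ.swap none none]
  · exact hrowSum i'
  · simp only [flow, hcolSum, ← hχ.swap]
  · simp only [flow, hrowSum, ← hχ.swap]
  · exact (hrow i i').symm
  · rfl
  · exact hcolSum j
  · exact (hχ.swap _ _).symm
  · exact (hcol j j').symm

lemma exists_flow_eq {y : Fin d → Fin n → ℝ}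
    {χ : Option (Fin d ⊕ Fin n) → Option (Fin d ⊕ Fin n) → ℝ} (hχ : IsCirculation χ)
    (hpos : ∀ a b, 0 < χ a b → 0 < flow y a b) : ∃ m, flow m = χ :=
  ⟨_, flow_eq_of_isCirculation hχ
    (fun _ _ => (isCirculation_flow y).eq_zero_of_eq_zero hχ hpos rfl)
    (fun _ _ => (isCirculation_flow y).eq_zero_of_eq_zero hχ hpos rfl)⟩

def Feasible (b : Fin d → ℝ) (z : Fin n → ℝ) (x : Fin d → Fin n → ℝ) : Prop :=
  (∀ i j, 0 ≤ x i j) ∧ (∀ i, ∑ j, x i j ≤ b i) ∧ (∀ j, ∑ i, x i j ≤ z j)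

def IsOptimal (f : (Fin d → Fin n → ℝ) →ₗ[ℝ] ℝ) (b : Fin d → ℝ) (z : Fin n → ℝ)
    (x : Fin d → Fin n → ℝ) : Prop :=
  Feasible b z x ∧ ∀ x', Feasible b z x' → f x' ≤ f x

lemma isCompact_setOf_feasible (b : Fin d → ℝ) (z : Fin n → ℝ) :
    IsCompact {x | Feasible b z x} := by
  refine (isCompact_Icc (a := (0 : Fin d → Fin n → ℝ)) (b := fun i _ => b i)).of_isClosed_subset
    ?_ ?_
  · simp only [Feasible, Set.ofPred_and, Set.ofPred_forall]
    refine .inter (isClosed_iInter fun i => isClosed_iInter fun j => ?_)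
      (.inter (isClosed_iInter fun i => ?_) (isClosed_iInter fun j => ?_)) <;>
    exact isClosed_le (by fun_prop) (by fun_prop)
  · rintro x ⟨hpos, hrow, -⟩
    exact ⟨fun i j => hpos i j, fun i j =>
      (single_le_sum (fun j _ => hpos i j) (mem_univ j)).trans (hrow i)⟩

lemma eventually_feasible_add_smul {b : Fin d → ℝ} {z : Fin n → ℝ} {x χ : Fin d → Fin n → ℝ}
    (hx : Feasible b z x) (hentry : ∀ i j, χ i j < 0 → 0 < x i j)
    (hrow : ∀ i, 0 < ∑ j, χ i j → ∑ j, x i j < b i)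
    (hcol : ∀ j, 0 < ∑ i, χ i j → ∑ i, x i j < z j) :
    ∀ᶠ ε in 𝓝[>] (0 : ℝ), Feasible b z (x + ε • χ) := by
  have hentry' : ∀ i j, ∀ᶠ ε in 𝓝[>] (0 : ℝ), 0 ≤ (x + ε • χ) i j := fun i j =>
    (eventually_add_mul_le (p := -x i j) (q := -χ i j) (c := 0) (by linarith [hx.1 i j])
      fun h => by linarith [hentry i j (by linarith)]).mono fun ε h => by
        simp only [Pi.add_apply, Pi.smul_apply, smul_eq_mul]; linarith
  have hrow' : ∀ i, ∀ᶠ ε in 𝓝[>] (0 : ℝ), ∑ j, (x + ε • χ) i j ≤ b i := fun i =>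
    (eventually_add_mul_le (hx.2.1 i) (hrow i)).mono fun ε h => by
      simpa only [Pi.add_apply, Pi.smul_apply, smul_eq_mul, sum_add_distrib, ← mul_sum] using h
  have hcol' : ∀ j, ∀ᶠ ε in 𝓝[>] (0 : ℝ), ∑ i, (x + ε • χ) i j ≤ z j := fun j =>
    (eventually_add_mul_le (hx.2.2 j) (hcol j)).mono fun ε h => by
      simpa only [Pi.add_apply, Pi.smul_apply, smul_eq_mul, sum_add_distrib, ← mul_sum] using h
  filter_upwards [eventually_all.2 fun i => eventually_all.2 (hentry' i), eventually_all.2 hrow',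
    eventually_all.2 hcol'] with ε h₁ h₂ h₃ using ⟨h₁, h₂, h₃⟩

lemma eventually_sum_abs_sub_le {y χ : Fin d → Fin n → ℝ}
    (hpos : ∀ i j, 0 < χ i j → 0 < y i j) (hneg : ∀ i j, χ i j < 0 → y i j < 0) :
    ∀ᶠ ε in 𝓝[>] (0 : ℝ),
      ∑ i, ∑ j, |y i j - ε * χ i j| ≤ ∑ i, ∑ j, |y i j| - ε * ∑ i, ∑ j, |χ i j| := by
  filter_upwards [eventually_all.2 fun i => eventually_all.2 fun j =>
    eventually_abs_sub_mul_le (hpos i j) (hneg i j)] with ε h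
  simp only [mul_sum, ← sum_sub_distrib]
  exact sum_le_sum fun i _ => sum_le_sum fun j _ => h i j

/-- The hub arcs of column `j` along which pushing `x₂` towards `x₁` (resp. `x₁` towards `x₂`)
runs into the capacity `z₂ j` (resp. `z₁ j`). -/
def TightArc (z₁ z₂ : Fin n → ℝ) (x₁ x₂ : Fin d → Fin n → ℝ) :
    Option (Fin d ⊕ Fin n) → Option (Fin d ⊕ Fin n) → Prop
  | some (.inr j), none => ∑ i, x₂ i j = z₂ j
  | none, some (.inr j) => ∑ i, x₁ i j = z₁ j
  | _, _ => False

lemma positiveFlowOn_tightArc_le {z₁ z₂ : Fin n → ℝ} {x₁ x₂ : Fin d → Fin n → ℝ}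
    (h₁ : ∀ j, ∑ i, x₁ i j ≤ z₁ j) (h₂ : ∀ j, ∑ i, x₂ i j ≤ z₂ j) :
    positiveFlowOn (TightArc z₁ z₂ x₁ x₂) (flow (x₁ - x₂)) ≤ ∑ j, |z₁ j - z₂ j| := by
  simp only [positiveFlowOn, Fintype.sum_option, Fintype.sum_sum_type, TightArc, flow,
    ↓reduceIte, sum_const_zero, zero_add, add_zero, ← sum_add_distrib]
  refine sum_le_sum fun j _ => ?_
  simp only [Pi.sub_apply, sum_sub_distrib, neg_sub]
  have hz := h₁ j
  have hz' := h₂ j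
  split_ifs with e₁ e₂ e₂
  · rw [e₁, e₂, ← neg_sub, posPart_neg, negPart_add_posPart, abs_sub_comm]
  · rw [posPart_def, add_zero]
    exact max_le (by rw [abs_sub_comm]; linarith [le_abs_self (z₂ j - z₁ j)]) (abs_nonneg _)
  · rw [posPart_def, zero_add]
    exact max_le (by linarith [le_abs_self (z₁ j - z₂ j)]) (abs_nonneg _)
  · simp

section Pushing

variable {f : (Fin d → Fin n → ℝ) →ₗ[ℝ] ℝ} {b : Fin d → ℝ} {z₁ z₂ : Fin n → ℝ}
  {x₁ x₂ m : Fin d → Fin n → ℝ}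

lemma eventually_feasible_of_conformal (hx₁ : Feasible b z₁ x₁) (hx₂ : Feasible b z₂ x₂)
    (hconf : ∀ u v, 0 < flow m u v → 0 < flow (x₁ - x₂) u v ∧ ¬ TightArc z₁ z₂ x₁ x₂ u v) :
    ∀ᶠ ε in 𝓝[>] (0 : ℝ), Feasible b z₂ (x₂ + ε • m) ∧ Feasible b z₁ (x₁ + ε • -m) ∧
      ∑ i, ∑ j, |x₁ i j - (x₂ + ε • m) i j| ≤
        ∑ i, ∑ j, |x₁ i j - x₂ i j| - ε * ∑ i, ∑ j, |m i j| := by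
  have hpos : ∀ i j, 0 < m i j → x₂ i j < x₁ i j := fun i j h => by
    have : 0 < x₁ i j - x₂ i j := (hconf (some (.inl i)) (some (.inr j)) h).1
    linarith
  have hneg : ∀ i j, m i j < 0 → x₁ i j < x₂ i j := fun i j h => by
    have : 0 < -(x₁ i j - x₂ i j) := (hconf (some (.inr j)) (some (.inl i)) (neg_pos.2 h)).1
    linarith
  have hrow₂ : ∀ i, 0 < ∑ j, m i j → ∑ j, x₂ i j < b i := fun i h => by
    have : 0 < ∑ j, (x₁ i j - x₂ i j) := (hconf none (some (.inl i)) h).1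
    linarith [sum_sub_distrib (s := univ) (f := x₁ i) (g := x₂ i), hx₁.2.1 i]
  have hrow₁ : ∀ i, 0 < ∑ j, (-m) i j → ∑ j, x₁ i j < b i := fun i h => by
    have : 0 < -∑ j, (x₁ i j - x₂ i j) :=
      (hconf (some (.inl i)) none
        (show 0 < -∑ j, m i j by simpa only [Pi.neg_apply, sum_neg_distrib] using h)).1
    linarith [sum_sub_distrib (s := univ) (f := x₁ i) (g := x₂ i), hx₂.2.1 i]
  have hcol₂ : ∀ j, 0 < ∑ i, m i j → ∑ i, x₂ i j < z₂ j := fun j h =>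
    (hx₂.2.2 j).lt_of_ne (hconf (some (.inr j)) none h).2
  have hcol₁ : ∀ j, 0 < ∑ i, (-m) i j → ∑ i, x₁ i j < z₁ j := fun j h =>
    (hx₁.2.2 j).lt_of_ne
      (hconf none (some (.inr j))
        (show 0 < -∑ i, m i j by simpa only [Pi.neg_apply, sum_neg_distrib] using h)).2
  filter_upwards [eventually_feasible_add_smul hx₂ (fun i j h => (hx₁.1 i j).trans_lt (hneg i j h))
      hrow₂ hcol₂,
    eventually_feasible_add_smul hx₁
      (fun i j h => (hx₂.1 i j).trans_lt (hpos i j (by simpa using h))) hrow₁ hcol₁,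
    eventually_sum_abs_sub_le (y := x₁ - x₂) (fun i j h => sub_pos.2 (hpos i j h))
      (fun i j h => sub_neg.2 (hneg i j h))] with ε h₂ h₁ hdist
  refine ⟨h₂, h₁, ?_⟩
  simpa only [Pi.add_apply, Pi.sub_apply, Pi.smul_apply, smul_eq_mul, sub_sub] using hdist

lemma eq_zero_of_isCirculation (hx₁ : IsOptimal f b z₁ x₁) (hx₂ : IsOptimal f b z₂ x₂)
    (hclosest : ∀ x, IsOptimal f b z₂ x →
      ∑ i, ∑ j, |x₁ i j - x₂ i j| ≤ ∑ i, ∑ j, |x₁ i j - x i j|)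
    {χ : Option (Fin d ⊕ Fin n) → Option (Fin d ⊕ Fin n) → ℝ} (hχ : IsCirculation χ)
    (hconf : ∀ u v, 0 < χ u v → 0 < flow (x₁ - x₂) u v ∧ ¬ TightArc z₁ z₂ x₁ x₂ u v) :
    χ = 0 := by
  obtain ⟨m, rfl⟩ := exists_flow_eq hχ fun u v h => (hconf u v h).1
  obtain ⟨ε, ⟨h₂, h₁, hdist⟩, hε : 0 < ε⟩ :=
    ((eventually_feasible_of_conformal hx₁.1 hx₂.1 hconf).and self_mem_nhdsWithin).exists
  have hfm : f m = 0 := by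
    have h₂' := hx₂.2 _ h₂
    have h₁' := hx₁.2 _ h₁
    simp only [map_add, map_smul, map_neg, smul_eq_mul] at h₁' h₂'
    exact (mul_eq_zero.1 (by linarith : ε * f m = 0)).resolve_left hε.ne'
  have hclose := hclosest _ ⟨h₂, fun x hx => by
    rw [map_add, map_smul, hfm, smul_zero, add_zero]; exact hx₂.2 x hx⟩
  have hm : ∑ i, ∑ j, |m i j| = 0 :=
    le_antisymm (nonpos_of_mul_nonpos_right (by linarith) hε) (by positivity)
  have hm0 : m = 0 := by
    ext i j
    rw [sum_eq_zero_iff_of_nonneg fun i _ => sum_nonneg fun j _ => abs_nonneg _] at hm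
    exact abs_eq_zero.1
      ((sum_eq_zero_iff_of_nonneg fun j _ => abs_nonneg _).1 (hm i (mem_univ i)) j (mem_univ j))
  rw [hm0, flow_zero]

end Pushing

def objective (r a : Fin d → Fin n → ℝ) : (Fin d → Fin n → ℝ) →ₗ[ℝ] ℝ where
  toFun x := ∑ i, ∑ j, x i j * r i j * a i j
  map_add' x y := by simp only [Pi.add_apply, add_mul, sum_add_distrib]
  map_smul' c x := by simp only [Pi.smul_apply, smul_eq_mul, RingHom.id_apply, mul_sum, mul_assoc]

end MatchingLP

open MatchingLP

theorem matching_lp_lipschitz_constant_one_general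
    (d n : ℕ) (r : Fin d → Fin n → ℝ)
    (a : Fin d → Fin n → ℝ)
    (b : Fin d → ℝ) (hb : ∀ i, 0 ≤ b i)
    (z₁ z₂ : Fin n → ℝ) (hz₂ : ∀ j, 0 ≤ z₂ j)
    (x₁ : Fin d → Fin n → ℝ)
    -- x₁ is an optimal solution of P[z₁, b]
    (hfeas₁ : (∀ i j, 0 ≤ x₁ i j) ∧ (∀ i, ∑ j, x₁ i j ≤ b i) ∧ (∀ j, ∑ i, x₁ i j ≤ z₁ j))
    (hopt₁ : ∀ x : Fin d → Fin n → ℝ,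
      (∀ i j, 0 ≤ x i j) → (∀ i, ∑ j, x i j ≤ b i) → (∀ j, ∑ i, x i j ≤ z₁ j) →
      ∑ i, ∑ j, x i j * r i j * a i j ≤ ∑ i, ∑ j, x₁ i j * r i j * a i j) :
    -- then there is an optimal solution x₂ of P[z₂, b] with ‖x₁ − x₂‖_∞ ≤ ‖z₁ − z₂‖₁
    ∃ x₂ : Fin d → Fin n → ℝ,
      ((∀ i j, 0 ≤ x₂ i j) ∧ (∀ i, ∑ j, x₂ i j ≤ b i) ∧ (∀ j, ∑ i, x₂ i j ≤ z₂ j)) ∧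
      (∀ x : Fin d → Fin n → ℝ,
        (∀ i j, 0 ≤ x i j) → (∀ i, ∑ j, x i j ≤ b i) → (∀ j, ∑ i, x i j ≤ z₂ j) →
        ∑ i, ∑ j, x i j * r i j * a i j ≤ ∑ i, ∑ j, x₂ i j * r i j * a i j) ∧
      (∀ i j, |x₁ i j - x₂ i j| ≤ ∑ j', |z₁ j' - z₂ j'|) := by
  obtain ⟨x₂, hfeas₂, hmax, hmin⟩ := (isCompact_setOf_feasible b z₂).exists_isMinOn_isMaxOn
    ⟨0, fun _ _ => le_rfl, fun i => by simpa using hb i, fun j => by simpa using hz₂ j⟩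
    (objective r a).continuous_of_finiteDimensional
    (g := fun x => ∑ i, ∑ j, |x₁ i j - x i j|) (by fun_prop)
  have hopt₁' : IsOptimal (objective r a) b z₁ x₁ :=
    ⟨hfeas₁, fun x hx => hopt₁ x hx.1 hx.2.1 hx.2.2⟩
  have hopt₂ : IsOptimal (objective r a) b z₂ x₂ := ⟨hfeas₂, fun x hx => hmax hx⟩
  have hflow_le := le_positiveFlowOn (isCirculation_flow (x₁ - x₂)) _
    (fun _ => eq_zero_of_isCirculation hopt₁' hopt₂ fun x hx => hmin ⟨hx.1, fun y hy => hx.2 y hy⟩)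
  have hbound := positiveFlowOn_tightArc_le hfeas₁.2.2 hfeas₂.2.2
  refine ⟨x₂, hfeas₂, fun x h₁ h₂ h₃ => hmax ⟨h₁, h₂, h₃⟩, fun i j => abs_le.2 ⟨?_, ?_⟩⟩
  · have : -(x₁ i j - x₂ i j) ≤ _ := hflow_le (some (.inr j)) (some (.inl i))
    linarith
  · have : x₁ i j - x₂ i j ≤ _ := hflow_le (some (.inl i)) (some (.inr j))
    linarith

/-- **Lipschitz property with constant 1 for the matching LP**: for the LP
`P[z, b] : max Σ_{ij} x_ij r_ij a_ij s.t. Σ_j x_ij ≤ b_i, Σ_i x_ij ≤ z_j, x ≥ 0`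
with nonnegative rewards `r`, binary adjacency `a` and budgets `b ≥ 0`, any optimal
solution `x¹` of `P[z¹, b]` has a companion optimal solution `x²` of `P[z², b]` with
`‖x¹ − x²‖_∞ ≤ ‖z¹ − z²‖₁`. -/
theorem matching_lp_lipschitz_constant_one
    (d n : ℕ) (r : Fin d → Fin n → ℝ) (hr : ∀ i j, 0 ≤ r i j)
    (a : Fin d → Fin n → ℝ) (ha : ∀ i j, a i j = 0 ∨ a i j = 1)
    (b : Fin d → ℝ) (hb : ∀ i, 0 ≤ b i)
    (z₁ z₂ : Fin n → ℝ) (hz₁ : ∀ j, 0 ≤ z₁ j) (hz₂ : ∀ j, 0 ≤ z₂ j)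
    (x₁ : Fin d → Fin n → ℝ)
    -- x₁ is an optimal solution of P[z₁, b]
    (hfeas₁ : (∀ i j, 0 ≤ x₁ i j) ∧ (∀ i, ∑ j, x₁ i j ≤ b i) ∧ (∀ j, ∑ i, x₁ i j ≤ z₁ j))
    (hopt₁ : ∀ x : Fin d → Fin n → ℝ,
      (∀ i j, 0 ≤ x i j) → (∀ i, ∑ j, x i j ≤ b i) → (∀ j, ∑ i, x i j ≤ z₁ j) →
      ∑ i, ∑ j, x i j * r i j * a i j ≤ ∑ i, ∑ j, x₁ i j * r i j * a i j) :
    -- then there is an optimal solution x₂ of P[z₂, b] with ‖x₁ − x₂‖_∞ ≤ ‖z₁ − z₂‖₁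
    ∃ x₂ : Fin d → Fin n → ℝ,
      ((∀ i j, 0 ≤ x₂ i j) ∧ (∀ i, ∑ j, x₂ i j ≤ b i) ∧ (∀ j, ∑ i, x₂ i j ≤ z₂ j)) ∧
      (∀ x : Fin d → Fin n → ℝ,
        (∀ i j, 0 ≤ x i j) → (∀ i, ∑ j, x i j ≤ b i) → (∀ j, ∑ i, x i j ≤ z₂ j) →
        ∑ i, ∑ j, x i j * r i j * a i j ≤ ∑ i, ∑ j, x₂ i j * r i j * a i j) ∧
      (∀ i j, |x₁ i j - x₂ i j| ≤ ∑ j', |z₁ j' - z₂ j'|) :=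
  matching_lp_lipschitz_constant_one_general d n r a b hb z₁ z₂ hz₂ x₁ hfeas₁ hopt₁
end

section
/- Ski-rental regret identity for the rent-then-buy policy: Let T, b, τ, X be natural numbers with τ ≤ T and X ≤ T, where X is the number of skiing days, renting costs 1 per day and buying costs b. The offline optimal cost is min(X, b), and the policy that rents the first τ days and buys on day τ+1 if there is still snow incurs cost min(X, τ) + b·1{X ≥ τ+1}. Writing X^t = max(X − (T − t), 0) for the number of remaining skiing days when t days remain (counting day t), the regret of this policy satisfies the exact identity: (min(X, τ) + b·1{X ≥ τ+1}) − min(X, b) = Σ_{t=T−τ+1}^{T} 1{X^t > b} + (b − X^{T−τ}) · 1{1 ≤ X^{T−τ} < b}. -/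
/-!
Substituting `k = T - t`, the sum counts the rental days `k < τ` on which more than `b` skiing
days remain, i.e. `k < X - b`; there are `min τ (X - b)` of them. What is left is an identity
between piecewise linear functions of `X`, settled by comparing `X` with `τ` and `b`.
-/

open Finset

theorem sum_range_ite_lt {R : Type*} [AddCommMonoidWithOne R] (n m : ℕ) :
    ∑ k ∈ range n, (if k < m then 1 else 0 : R) = (min n m : ℕ) := by
  have : (range n).filter (· < m) = range (min n m) := by ext; simp
  rw [sum_boole, this, card_range]

theorem sum_Icc_sub_eq_sum_range {M : Type*} [AddCommMonoid M] (f : ℕ → M) {T n : ℕ}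
    (hn : n ≤ T) : ∑ t ∈ Icc (T - n + 1) T, f (T - t) = ∑ k ∈ range n, f k :=
  sum_nbij' (T - ·) (T - ·) (by intro t; simp; omega) (by intro k; simp; omega)
    (by intro t; simp; omega) (by intro k; simp; omega) (fun _ _ => rfl)

theorem rentThenBuy_regret_eq (b τ X : ℕ) :
    ((min X τ : ℤ) + b * (if τ + 1 ≤ X then 1 else 0)) - min X b
      = (min τ (X - b) : ℕ) + ((b : ℤ) - (X - τ : ℕ)) *
          (if 1 ≤ X - τ ∧ X - τ < b then 1 else 0) := by
  split_ifs <;> omega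

theorem ski_rental_regret_identity_general
    (T b τ X : ℕ) (hτ : τ ≤ T) :
    ((min X τ : ℝ) + (b : ℝ) * (if τ + 1 ≤ X then 1 else 0)) - (min X b : ℝ)
      = (∑ t ∈ Finset.Icc (T - τ + 1) T, if b < X - (T - t) then (1 : ℝ) else 0)
        + ((b : ℝ) - (X - (T - (T - τ)) : ℕ)) *
            (if 1 ≤ X - (T - (T - τ)) ∧ X - (T - (T - τ)) < b then 1 else 0) := by
  have hdays : (∑ t ∈ Icc (T - τ + 1) T, if b < X - (T - t) then (1 : ℝ) else 0)
      = (min τ (X - b) : ℕ) := by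
    rw [sum_Icc_sub_eq_sum_range (fun k => if b < X - k then (1 : ℝ) else 0) hτ,
      ← sum_range_ite_lt]
    exact sum_congr rfl fun k _ => if_congr (by omega) rfl rfl
  rw [hdays, Nat.sub_sub_self hτ]
  exact_mod_cast rentThenBuy_regret_eq b τ X

/-- **Ski-rental regret identity for the rent-then-buy policy**: with `T` days, buying
cost `b`, `X ≤ T` skiing days and the policy that rents the first `τ ≤ T` days and buys on
day `τ+1` if there is still snow, the regret (online cost minus offline cost `min(X,b)`)
equals `Σ_{t=T−τ+1}^{T} 1{X^t > b} + (b − X^{T−τ})·1{1 ≤ X^{T−τ} < b}`, where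
`X^t = max(X − (T − t), 0)` is the number of remaining skiing days with `t` days to go. -/
theorem ski_rental_regret_identity
    (T b τ X : ℕ) (hτ : τ ≤ T) (hX : X ≤ T) :
    ((min X τ : ℝ) + (b : ℝ) * (if τ + 1 ≤ X then 1 else 0)) - (min X b : ℝ)
      = (∑ t ∈ Finset.Icc (T - τ + 1) T, if b < X - (T - t) then (1 : ℝ) else 0)
        + ((b : ℝ) - (X - (T - (T - τ)) : ℕ)) *
            (if 1 ≤ X - (T - (T - τ)) ∧ X - (T - (T - τ)) < b then 1 else 0) :=
  ski_rental_regret_identity_general T b τ X hτ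
end

section
/- Key inequality behind the Ω(√T) fluid gap: Let A ∈ ℝ^{d×n}, r ∈ ℝⁿ, B ∈ ℝ₊^d, and for z ∈ ℝ₊ⁿ let v(z) denote the optimal value of the LP P[z]: max{r'x : Ax ≤ B, 0 ≤ x ≤ z}. Let Z be an integrable random vector taking values in ℝ₊ⁿ with mean μ = E[Z], and assume v(Z) is integrable. Suppose (α¹, β¹) and (α², β²) are both feasible for the dual D[μ]: min{α'B + β'μ : A'α + β ≥ r, α ≥ 0, β ≥ 0}, and both are optimal with no duality gap, i.e., (α^k)'B + (β^k)'μ = v(μ) for k = 1, 2. Then v(μ) − E[v(Z)] ≥ E[ ((μ − Z)'(β¹ − β²))₊ ], where (y)₊ = max(y, 0). -/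
/-!
Weak duality bounds `v(Z)` by `αₖ'B + βₖ'Z`, which by optimality at the mean equals
`v(μ) - βₖ'(μ - Z)`. Hence `v(μ) - v(Z) ≥ max(β₁'(μ - Z), β₂'(μ - Z))
= β₂'(μ - Z) + ((μ - Z)'(β₁ - β₂))₊`, and taking expectations kills the centred term `β₂'(μ - Z)`.
-/

open MeasureTheory Matrix

section WeakDuality

variable {R m n : Type*} [CommRing R] [PartialOrder R] [IsOrderedRing R] [Fintype m] [Fintype n]
  {A : Matrix m n R} {B : m → R} {r z : n → R} {α : m → R} {β : n → R}

theorem dotProduct_le_dual_objective {x : n → R} (hAx : A *ᵥ x ≤ B) (hx : 0 ≤ x) (hxz : x ≤ z)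
    (hdual : r ≤ Aᵀ *ᵥ α + β) (hα : 0 ≤ α) (hβ : 0 ≤ β) :
    r ⬝ᵥ x ≤ α ⬝ᵥ B + β ⬝ᵥ z :=
  calc r ⬝ᵥ x
      ≤ (Aᵀ *ᵥ α + β) ⬝ᵥ x := dotProduct_le_dotProduct_of_nonneg_right hdual hx
    _ = α ⬝ᵥ A *ᵥ x + β ⬝ᵥ x := by rw [add_dotProduct, mulVec_transpose, ← dotProduct_mulVec]
    _ ≤ α ⬝ᵥ B + β ⬝ᵥ z := add_le_add (dotProduct_le_dotProduct_of_nonneg_left hAx hα)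
        (dotProduct_le_dotProduct_of_nonneg_left hxz hβ)

theorem le_dual_objective_of_isGreatest {w : R}
    (hw : IsGreatest {val | ∃ x, A *ᵥ x ≤ B ∧ 0 ≤ x ∧ x ≤ z ∧ val = r ⬝ᵥ x} w)
    (hdual : r ≤ Aᵀ *ᵥ α + β) (hα : 0 ≤ α) (hβ : 0 ≤ β) :
    w ≤ α ⬝ᵥ B + β ⬝ᵥ z := by
  obtain ⟨x, hAx, hx, hxz, rfl⟩ := hw.1
  exact dotProduct_le_dual_objective hAx hx hxz hdual hα hβ

end WeakDuality

theorem max_dotProduct_sub_add_le_of_dual_optimal {R m n : Type*} [CommRing R] [LinearOrder R]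
    [IsOrderedRing R] [Fintype m] [Fintype n] {B α₁ α₂ : m → R} {β₁ β₂ μ z : n → R} {V w : R}
    (h₁ : w ≤ α₁ ⬝ᵥ B + β₁ ⬝ᵥ z) (h₂ : w ≤ α₂ ⬝ᵥ B + β₂ ⬝ᵥ z)
    (hopt₁ : α₁ ⬝ᵥ B + β₁ ⬝ᵥ μ = V) (hopt₂ : α₂ ⬝ᵥ B + β₂ ⬝ᵥ μ = V) :
    max ((μ - z) ⬝ᵥ (β₁ - β₂)) 0 + (μ - z) ⬝ᵥ β₂ ≤ V - w := by
  rw [← max_add_add_right, zero_add, dotProduct_sub, sub_add_cancel]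
  simp only [dotProduct_comm (μ - z), dotProduct_sub]
  exact max_le (by linear_combination hopt₁ + h₁) (by linear_combination hopt₂ + h₂)

section Expectation

variable {Ω n : Type*} [Fintype n] [MeasurableSpace Ω] {P : Measure Ω} {Y : Ω → n → ℝ}

theorem integrable_dotProduct_const (hY : ∀ j, Integrable (fun ω => Y ω j) P) (c : n → ℝ) :
    Integrable (fun ω => Y ω ⬝ᵥ c) P :=
  integrable_finsetSum _ fun j _ => (hY j).mul_const (c j)

theorem integral_dotProduct_const (hY : ∀ j, Integrable (fun ω => Y ω j) P) (c : n → ℝ) :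
    ∫ ω, Y ω ⬝ᵥ c ∂P = (fun j => ∫ ω, Y ω j ∂P) ⬝ᵥ c := by
  simp only [dotProduct]
  rw [integral_finsetSum _ fun j _ => (hY j).mul_const (c j)]
  simp only [integral_mul_const]

end Expectation

theorem fluid_gap_key_inequality_general
    {Ω : Type*} [MeasurableSpace Ω] (P : Measure Ω) [IsProbabilityMeasure P]
    (d n : ℕ) (A : Matrix (Fin d) (Fin n) ℝ) (r : Fin n → ℝ) (B : Fin d → ℝ)
    -- the LP value function v : for every z ≥ 0, v z is the maximum of r'x over the
    -- (compact, nonempty) feasible region {x : Ax ≤ B, 0 ≤ x ≤ z}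
    (v : (Fin n → ℝ) → ℝ)
    (hv : ∀ z : Fin n → ℝ, (∀ j, 0 ≤ z j) →
      IsGreatest {val : ℝ | ∃ x : Fin n → ℝ,
        (∀ i, A.mulVec x i ≤ B i) ∧ (∀ j, 0 ≤ x j) ∧ (∀ j, x j ≤ z j) ∧
        val = r ⬝ᵥ x} (v z))
    -- the random demand vector Z, nonnegative and integrable, with mean μvec
    (Z : Ω → Fin n → ℝ)
    (hZpos : ∀ x j, 0 ≤ Z x j)
    (hZint : ∀ j, Integrable (fun x => Z x j) P)
    (μvec : Fin n → ℝ)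
    (hμvec : ∀ j, μvec j = ∫ x, Z x j ∂P)
    (hvZint : Integrable (fun x => v (Z x)) P)
    -- two dual solutions, both feasible and optimal for the fluid dual D[μvec]
    (α₁ α₂ : Fin d → ℝ) (β₁ β₂ : Fin n → ℝ)
    (hfeas₁ : (∀ j, r j ≤ Aᵀ.mulVec α₁ j + β₁ j) ∧ (∀ i, 0 ≤ α₁ i) ∧ (∀ j, 0 ≤ β₁ j))
    (hfeas₂ : (∀ j, r j ≤ Aᵀ.mulVec α₂ j + β₂ j) ∧ (∀ i, 0 ≤ α₂ i) ∧ (∀ j, 0 ≤ β₂ j))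
    (hopt₁ : α₁ ⬝ᵥ B + β₁ ⬝ᵥ μvec = v μvec)
    (hopt₂ : α₂ ⬝ᵥ B + β₂ ⬝ᵥ μvec = v μvec) :
    (∫ x, max ((μvec - Z x) ⬝ᵥ (β₁ - β₂)) 0 ∂P)
      ≤ v μvec - ∫ x, v (Z x) ∂P := by
  obtain ⟨hd₁, hα₁, hβ₁⟩ := hfeas₁
  obtain ⟨hd₂, hα₂, hβ₂⟩ := hfeas₂
  have hdev : ∀ j, Integrable (fun ω => (μvec - Z ω) j) P :=
    fun j => (integrable_const _).sub (hZint j)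
  have hdev_mean : (fun j => ∫ ω, (μvec - Z ω) j ∂P) = 0 := by
    ext j
    simp [integral_sub (integrable_const _) (hZint j), hμvec j]
  have hpointwise (ω : Ω) :
      max ((μvec - Z ω) ⬝ᵥ (β₁ - β₂)) 0 ≤ v μvec - v (Z ω) - (μvec - Z ω) ⬝ᵥ β₂ :=
    le_sub_iff_add_le.2 <| max_dotProduct_sub_add_le_of_dual_optimal
      (le_dual_objective_of_isGreatest (hv _ (hZpos ω)) hd₁ hα₁ hβ₁)
      (le_dual_objective_of_isGreatest (hv _ (hZpos ω)) hd₂ hα₂ hβ₂) hopt₁ hopt₂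
  have hgap : Integrable (fun ω => v μvec - v (Z ω)) P := (integrable_const _).sub hvZint
  calc ∫ ω, max ((μvec - Z ω) ⬝ᵥ (β₁ - β₂)) 0 ∂P
      ≤ ∫ ω, (v μvec - v (Z ω) - (μvec - Z ω) ⬝ᵥ β₂) ∂P :=
        integral_mono (integrable_dotProduct_const hdev _).pos_part
          (hgap.sub (integrable_dotProduct_const hdev _)) hpointwise
    _ = v μvec - ∫ ω, v (Z ω) ∂P := by
        rw [integral_sub hgap (integrable_dotProduct_const hdev _),
          integral_sub (integrable_const _) hvZint, integral_dotProduct_const hdev, hdev_mean]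
        simp

/-- **Key inequality behind the `Ω(√T)` fluid gap**: for the packing LP
`v(z) = max{r'x : Ax ≤ B, 0 ≤ x ≤ z}` with nonnegative budgets `B`, an integrable
nonnegative random demand vector `Z` with mean `μvec` and integrable value `v(Z)`, and two
dual-feasible pairs `(α¹,β¹)`, `(α²,β²)` that are both optimal for the fluid dual (no
duality gap at `μvec`), the fluid gap satisfies
`v(μvec) − E[v(Z)] ≥ E[((μvec − Z)'(β¹ − β²))₊]`. -/
theorem fluid_gap_key_inequality
    {Ω : Type*} [MeasurableSpace Ω] (P : Measure Ω) [IsProbabilityMeasure P]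
    (d n : ℕ) (A : Matrix (Fin d) (Fin n) ℝ) (r : Fin n → ℝ) (B : Fin d → ℝ)
    (hB : ∀ i, 0 ≤ B i)
    -- the LP value function v : for every z ≥ 0, v z is the maximum of r'x over the
    -- (compact, nonempty) feasible region {x : Ax ≤ B, 0 ≤ x ≤ z}
    (v : (Fin n → ℝ) → ℝ)
    (hv : ∀ z : Fin n → ℝ, (∀ j, 0 ≤ z j) →
      IsGreatest {val : ℝ | ∃ x : Fin n → ℝ,
        (∀ i, A.mulVec x i ≤ B i) ∧ (∀ j, 0 ≤ x j) ∧ (∀ j, x j ≤ z j) ∧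
        val = r ⬝ᵥ x} (v z))
    -- the random demand vector Z, nonnegative and integrable, with mean μvec
    (Z : Ω → Fin n → ℝ)
    (hZpos : ∀ x j, 0 ≤ Z x j)
    (hZint : ∀ j, Integrable (fun x => Z x j) P)
    (μvec : Fin n → ℝ)
    (hμvec : ∀ j, μvec j = ∫ x, Z x j ∂P)
    (hvZint : Integrable (fun x => v (Z x)) P)
    -- two dual solutions, both feasible and optimal for the fluid dual D[μvec]
    (α₁ α₂ : Fin d → ℝ) (β₁ β₂ : Fin n → ℝ)
    (hfeas₁ : (∀ j, r j ≤ Aᵀ.mulVec α₁ j + β₁ j) ∧ (∀ i, 0 ≤ α₁ i) ∧ (∀ j, 0 ≤ β₁ j))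
    (hfeas₂ : (∀ j, r j ≤ Aᵀ.mulVec α₂ j + β₂ j) ∧ (∀ i, 0 ≤ α₂ i) ∧ (∀ j, 0 ≤ β₂ j))
    (hopt₁ : α₁ ⬝ᵥ B + β₁ ⬝ᵥ μvec = v μvec)
    (hopt₂ : α₂ ⬝ᵥ B + β₂ ⬝ᵥ μvec = v μvec) :
    (∫ x, max ((μvec - Z x) ⬝ᵥ (β₁ - β₂)) 0 ∂P)
      ≤ v μvec - ∫ x, v (Z x) ∂P :=
  fluid_gap_key_inequality_general P d n A r B v hv Z hZpos hZint μvec hμvec hvZint α₁ α₂ β₁ β₂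
    hfeas₁ hfeas₂ hopt₁ hopt₂
end
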